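/- arXiv:1511.00514 — 5 statements merged into one kernel-verified Lean document; each statement's English description precedes it below -/
import Mathlib

section
/- Let f be given by an admissible representation f(z) = (−2π/(a·log z))·(1 + Σ_{n≥1} Φ_n(z)/(log z)^n). Then there exists ε > 0 such that for every real x ∈ (0, ε) the value f(x) is real, and f restricted to (0, ε) is strictly increasing (in particular one-to-one), so that f maps (0, ε) bijectively onto a real interval (0, R') with f(x) → 0 as x → 0⁺. -/
open Complex Filter Topology

/-- `Phi c n z = Σ_{k≥0} c_{n,k} z^k`. -/
noncomputable def Phi (c : ℕ → ℕ → ℝ) (n : ℕ) (z : ℂ) : ℂ :=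
  ∑' k : ℕ, (c n k : ℂ) * z ^ k

/-- Termwise derivative `Σ_{k≥1} k·c_{n,k} z^{k-1}`. -/
noncomputable def PhiD (c : ℕ → ℕ → ℝ) (n : ℕ) (z : ℂ) : ℂ :=
  ∑' k : ℕ, ((k + 1 : ℕ) : ℂ) * (c n (k + 1) : ℂ) * z ^ k

/-- `f(z) = (−2π/(a·log z))·(1 + Σ_{n≥1} Φ_n(z)/(log z)^n)`, where `Complex.log`
is the branch with `log i = iπ/2`, continuous on the closed upper half-plane minus `0`. -/
noncomputable def fRep (a : ℝ) (c : ℕ → ℕ → ℝ) (z : ℂ) : ℂ :=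
  (-(2 * (Real.pi : ℂ)) / ((a : ℂ) * Complex.log z)) *
    (1 + ∑' n : ℕ, Phi c (n + 1) z / (Complex.log z) ^ (n + 1))

/-- Admissibility of the representation `fRep a c`. -/
def Admissible (a : ℝ) (c : ℕ → ℕ → ℝ) : Prop :=
  0 < a ∧
  (∃ B : ℝ, ∀ n : ℕ, 1 ≤ n → ∀ k : ℕ, 1 ≤ k → |c n k| ^ ((1 : ℝ) / (k : ℝ)) ≤ B) ∧
  (∃ r > (0 : ℝ), ∃ M > (0 : ℝ), ∀ n : ℕ, 1 ≤ n → ∀ z : ℂ,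
      ‖z‖ ≤ r → 0 ≤ z.im → ‖Phi c n z‖ ≤ M ^ n) ∧
  (∃ r > (0 : ℝ), ∃ M > (0 : ℝ), ∀ n : ℕ, 1 ≤ n → ∀ z : ℂ,
      ‖z‖ ≤ r → 0 ≤ z.im → ‖PhiD c n z‖ ≤ M ^ n) ∧
  c 1 0 ≠ 0

/-!
For real `0 < x < ε` everything is real: `f(x) = (2π/a) (1 + S(x)) / (-log x)` with
`S(x) = Σ_{n ≥ 1} Φ_n(x) / (log x)^n`. Choose `M` bounding `Φ_n` and `Φ_n'` by `M^n` and `ε` so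
small that `|log x| ≥ 8M` and `8Mx ≤ 1`. Then `S` is dominated by `Σ 8^{-n}`, so `|S| ≤ 1/7`, and
differentiating termwise (the coefficient bound (i) makes each `Φ_n` differentiable with derivative
`Φ_n'`) gives `|S'(x)| ≤ 1 / (3x |log x|)`. Hence the derivative
`(S'(x) (-log x) + (1 + S(x)) / x) / (log x)^2` of `(1 + S) / (-log x)` is at least
`(6/7 - 1/3) / (x (log x)^2) > 0`. Since `(1 + S) / (-log x) → 0`, the intermediate value theorem
gives the bijection of `(0, ε)` onto `(0, f(ε))`.
-/

open Set

lemma abs_le_pow_of_rpow_one_div_le {t B : ℝ} {k : ℕ} (hk : k ≠ 0)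
    (h : |t| ^ ((1 : ℝ) / k) ≤ B) : |t| ≤ B ^ k := by
  calc |t| = (|t| ^ ((1 : ℝ) / k)) ^ k := by
        rw [← Real.rpow_natCast, ← Real.rpow_mul (abs_nonneg t), one_div,
          inv_mul_cancel₀ (Nat.cast_ne_zero.mpr hk), Real.rpow_one]
    _ ≤ B ^ k := pow_le_pow_left₀ (by positivity) h k

lemma hasDerivAt_tsum_mul_pow {b : ℕ → ℝ} {B x : ℝ} (hB : 0 < B)
    (hb : ∀ k, 1 ≤ k → |b k| ≤ B ^ k) (hx : x ∈ Ioo (-(1 / (2 * B))) (1 / (2 * B))) :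
    HasDerivAt (fun y => ∑' k, b k * y ^ k) (∑' k, ((k + 1 : ℕ) : ℝ) * b (k + 1) * x ^ k) x := by
  have hbound : ∀ k, ∀ y ∈ Ioo (-(1 / (2 * B))) (1 / (2 * B)),
      ‖b k * (k * y ^ (k - 1))‖ ≤ 2 * B * (k * (1 / 2) ^ k) := by
    rintro (_ | k) y hy
    · simp
    have hy : |y| ≤ 1 / (2 * B) := abs_le.mpr ⟨hy.1.le, hy.2.le⟩
    calc ‖b (k + 1) * ((k + 1 : ℕ) * y ^ k)‖ = |b (k + 1)| * ((k + 1 : ℕ) * |y| ^ k) := by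
          rw [Real.norm_eq_abs, abs_mul, abs_mul, abs_pow, Nat.abs_cast]
      _ ≤ B ^ (k + 1) * ((k + 1 : ℕ) * (1 / (2 * B)) ^ k) := by
          gcongr
          exact hb _ le_add_self
      _ = 2 * B * ((k + 1 : ℕ) * (1 / 2) ^ (k + 1)) := by
          have hpow : B ^ k * (1 / (2 * B)) ^ k = (1 / 2) ^ k := by
            rw [← mul_pow]; field_simp
          linear_combination (B * ((k + 1 : ℕ) : ℝ)) * hpow
  have hsum : Summable fun k : ℕ => 2 * B * (k * (1 / 2 : ℝ) ^ k) := by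
    refine (summable_pow_mul_geometric_of_norm_lt_one 1 ?_).mul_left (2 * B) |>.congr
      fun k => by rw [pow_one]
    norm_num
  have hzero : (0 : ℝ) ∈ Ioo (-(1 / (2 * B))) (1 / (2 * B)) := ⟨by simp [hB], by positivity⟩
  have hderiv := hasDerivAt_tsum_of_isPreconnected hsum isOpen_Ioo isPreconnected_Ioo
    (g := fun k y => b k * y ^ k) (fun k y _ => (hasDerivAt_pow k y).const_mul (b k)) hbound
    hzero (summable_of_ne_finset_zero (s := {0}) fun k hk => by simp_all) hx
  refine hderiv.congr_deriv ?_
  rw [(Summable.of_norm_bounded hsum fun k => hbound k x hx).tsum_eq_zero_add]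
  simp only [CharP.cast_eq_zero, zero_mul, mul_zero, zero_add, add_tsub_cancel_right]
  exact tsum_congr fun k => by ring

lemma eight_mul_le_neg_log {M x : ℝ} (hx : 0 < x) (hxM : x < Real.exp (-(8 * M))) :
    8 * M ≤ -Real.log x := by
  have := Real.log_lt_log hx hxM
  rw [Real.log_exp] at this
  linarith

lemma eight_mul_mul_le_one {M x : ℝ} (hx : 0 < x) (hxM : x < Real.exp (-(8 * M))) :
    8 * M * x ≤ 1 := by
  have h1 : 8 * M + 1 ≤ Real.exp (8 * M) := Real.add_one_le_exp _
  have h2 : x * Real.exp (8 * M) < 1 := by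
    have := mul_lt_mul_of_pos_right hxM (Real.exp_pos (8 * M))
    rwa [← Real.exp_add, neg_add_cancel, Real.exp_zero] at this
  nlinarith [Real.exp_pos (8 * M)]

lemma abs_div_pow_le {u ℓ M : ℝ} {n : ℕ} (hM : 0 < M) (hu : |u| ≤ M ^ n) (hℓ : 8 * M ≤ |ℓ|) :
    |u / ℓ ^ n| ≤ (1 / 8) ^ n := by
  have hℓ0 : 0 < |ℓ| := by linarith
  rw [abs_div, abs_pow, div_le_iff₀ (by positivity), ← mul_pow]
  exact hu.trans (pow_le_pow_left₀ hM.le (by linarith) n)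

lemma hasDerivAt_div_log_pow {u : ℝ → ℝ} {u' y : ℝ} (n : ℕ) (hu : HasDerivAt u u' y) (hy : 0 < y)
    (hlog : Real.log y ≠ 0) :
    HasDerivAt (fun z => u z / Real.log z ^ (n + 1))
      (u' / Real.log y ^ (n + 1) - (n + 1 : ℕ) * u y / (y * Real.log y ^ (n + 2))) y := by
  have hpow := (hasDerivAt_pow (n + 1) (Real.log y)).comp y (Real.hasDerivAt_log hy.ne')
  simp only [Nat.add_sub_cancel] at hpow
  refine (hu.div hpow (pow_ne_zero _ hlog)).congr_deriv ?_
  simp only [Function.comp_apply]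
  field_simp
  ring

/-- With `ℓ = log y`, the left side is the derivative at `y` of `u / log ^ (n + 1)`
(`hasDerivAt_div_log_pow`). -/
lemma abs_sub_div_pow_le {u u' ℓ M y : ℝ} (n : ℕ) (hM : 0 < M) (hy : 0 < y)
    (hu : |u| ≤ M ^ (n + 1)) (hu' : |u'| ≤ M ^ (n + 1)) (hℓ : 8 * M ≤ |ℓ|) (hMy : 8 * M * y ≤ 1) :
    |u' / ℓ ^ (n + 1) - (n + 1 : ℕ) * u / (y * ℓ ^ (n + 2))| ≤ (1 / 4) ^ (n + 1) / (y * |ℓ|) := by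
  have hℓ0 : 0 < |ℓ| := by linarith
  set q := M / |ℓ| with hq
  have hq0 : 0 ≤ q := by positivity
  have hq8 : q ≤ 1 / 8 := by rw [div_le_iff₀ hℓ0]; linarith
  have hqy : q * (y * |ℓ|) ≤ 1 / 8 := by
    rw [hq, div_mul_eq_mul_div, div_le_iff₀ hℓ0]; nlinarith
  have hfirst : |u' / ℓ ^ (n + 1)| ≤ q ^ (n + 1) := by
    rw [abs_div, abs_pow, hq, div_pow]
    gcongr
  have hsecond : |(n + 1 : ℕ) * u / (y * ℓ ^ (n + 2))| ≤ (n + 1) * q ^ (n + 1) / (y * |ℓ|) := by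
    have hsplit : |(n + 1 : ℕ) * u / (y * ℓ ^ (n + 2))| =
        (n + 1) * (|u| / |ℓ| ^ (n + 1)) / (y * |ℓ|) := by
      rw [abs_div, abs_mul, abs_mul, abs_pow, Nat.abs_cast, abs_of_pos hy]
      push_cast
      field_simp
      ring
    rw [hsplit, hq, div_pow]
    gcongr
  calc _ ≤ |u' / ℓ ^ (n + 1)| + |(n + 1 : ℕ) * u / (y * ℓ ^ (n + 2))| := abs_sub _ _
    _ ≤ q ^ (n + 1) + (n + 1) * q ^ (n + 1) / (y * |ℓ|) := add_le_add hfirst hsecond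
    _ ≤ ((n + 2) * (1 / 8) ^ (n + 1)) / (y * |ℓ|) := by
      rw [le_div_iff₀ (by positivity), add_mul, div_mul_cancel₀ _ (by positivity)]
      calc q ^ (n + 1) * (y * |ℓ|) + (n + 1) * q ^ (n + 1)
          = q ^ n * (q * (y * |ℓ|)) + (n + 1) * q ^ (n + 1) := by ring
        _ ≤ (1 / 8) ^ n * (1 / 8) + (n + 1) * (1 / 8) ^ (n + 1) := by
          gcongr
        _ = (n + 2) * (1 / 8) ^ (n + 1) := by ring
    _ ≤ (1 / 4) ^ (n + 1) / (y * |ℓ|) := by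
      gcongr
      calc ((n : ℝ) + 2) * (1 / 8) ^ (n + 1) ≤ 2 ^ (n + 1) * (1 / 8) ^ (n + 1) := by
            gcongr
            exact_mod_cast Nat.lt_two_pow_self (n := n + 1)
        _ = (1 / 4) ^ (n + 1) := by rw [← mul_pow]; norm_num

lemma hasSum_geometric_succ {r : ℝ} (h₀ : 0 ≤ r) (h₁ : r < 1) :
    HasSum (fun n : ℕ => r ^ (n + 1)) (r / (1 - r)) := by
  simpa only [pow_succ, div_eq_mul_inv, mul_comm] using
    (hasSum_geometric_of_lt_one h₀ h₁).mul_right r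

lemma eight_mul_le_abs_log {M x : ℝ} (hx : 0 < x) (hxM : x < Real.exp (-(8 * M))) :
    8 * M ≤ |Real.log x| :=
  (eight_mul_le_neg_log hx hxM).trans (neg_le_abs _)

noncomputable def logSeries (φ : ℕ → ℝ → ℝ) (x : ℝ) : ℝ :=
  ∑' n : ℕ, φ (n + 1) x / Real.log x ^ (n + 1)

lemma abs_logSeries_le {φ : ℕ → ℝ → ℝ} {M x : ℝ} (hM : 0 < M) (hx : 0 < x)
    (hxM : x < Real.exp (-(8 * M))) (hφ : ∀ n, |φ (n + 1) x| ≤ M ^ (n + 1)) :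
    |logSeries φ x| ≤ 1 / 7 := by
  have hgeom := hasSum_geometric_succ (r := 1 / 8) (by norm_num) (by norm_num)
  have hterm n : ‖φ (n + 1) x / Real.log x ^ (n + 1)‖ ≤ (1 / 8) ^ (n + 1) :=
    abs_div_pow_le hM (hφ n) (eight_mul_le_abs_log hx hxM)
  calc |logSeries φ x| ≤ ∑' n : ℕ, (1 / 8 : ℝ) ^ (n + 1) :=
        tsum_of_norm_bounded hgeom.summable.hasSum hterm
    _ = 1 / 7 := by rw [hgeom.tsum_eq]; norm_num

structure LogSeriesBounds (φ ψ : ℕ → ℝ → ℝ) (M ε : ℝ) : Prop where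
  pos : 0 < M
  le_exp : ε ≤ Real.exp (-(8 * M))
  abs_phi_le : ∀ n, ∀ x ∈ Ioo 0 ε, |φ (n + 1) x| ≤ M ^ (n + 1)
  abs_psi_le : ∀ n, ∀ x ∈ Ioo 0 ε, |ψ (n + 1) x| ≤ M ^ (n + 1)
  hasDerivAt_phi : ∀ n, ∀ x ∈ Ioo 0 ε, HasDerivAt (φ (n + 1)) (ψ (n + 1) x) x

namespace LogSeriesBounds

variable {φ ψ : ℕ → ℝ → ℝ} {M ε x : ℝ}

lemma abs_logSeries_le (h : LogSeriesBounds φ ψ M ε) (hx : x ∈ Ioo 0 ε) :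
    |logSeries φ x| ≤ 1 / 7 :=
  _root_.abs_logSeries_le h.pos hx.1 (hx.2.trans_le h.le_exp) fun n => h.abs_phi_le n x hx

lemma tendsto_one_add_logSeries_div (h : LogSeriesBounds φ ψ M ε) (hε : 0 < ε) :
    Tendsto (fun y => (1 + logSeries φ y) / -Real.log y) (𝓝[>] 0) (𝓝 0) := by
  have hS : ∀ᶠ y in 𝓝[>] 0, |logSeries φ y| ≤ 1 / 7 := by
    filter_upwards [Ioo_mem_nhdsGT hε] with y hy
    exact h.abs_logSeries_le hy
  exact tendsto_bdd_div_atTop_nhds_zero (b := 6 / 7) (B := 8 / 7)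
    (hS.mono fun y hy => by linarith [(abs_le.mp hy).1])
    (hS.mono fun y hy => by linarith [(abs_le.mp hy).2])
    (tendsto_neg_atBot_atTop.comp Real.tendsto_log_nhdsGT_zero)

lemma exists_hasDerivAt_logSeries (h : LogSeriesBounds φ ψ M ε) (hx : x ∈ Ioo 0 ε) :
    ∃ D, HasDerivAt (logSeries φ) D x ∧ |D| ≤ 1 / (3 * x * |Real.log x|) := by
  have hx0 : 0 < x := hx.1
  have hM := h.pos
  have hlt {y} (hy : y ∈ Ioo 0 ε) : y < Real.exp (-(8 * M)) := hy.2.trans_le h.le_exp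
  have hlog {y} (hy : y ∈ Ioo 0 ε) : 8 * M ≤ |Real.log y| := eight_mul_le_abs_log hy.1 (hlt hy)
  have hlog0 {y} (hy : y ∈ Ioo 0 ε) : Real.log y ≠ 0 :=
    abs_pos.mp (lt_of_lt_of_le (by positivity) (hlog hy))
  set g' : ℕ → ℝ → ℝ := fun n y => ψ (n + 1) y / Real.log y ^ (n + 1) -
    (n + 1 : ℕ) * φ (n + 1) y / (y * Real.log y ^ (n + 2))
  have hg'le n {y} (hy : y ∈ Ioo 0 ε) : |g' n y| ≤ (1 / 4) ^ (n + 1) / (y * |Real.log y|) :=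
    abs_sub_div_pow_le n hM hy.1 (h.abs_phi_le n y hy) (h.abs_psi_le n y hy) (hlog hy)
      (eight_mul_mul_le_one hy.1 (hlt hy))
  have hsub : Ioo (x / 2) ε ⊆ Ioo 0 ε := fun y hy => ⟨by linarith [hy.1], hy.2⟩
  have hgeom := hasSum_geometric_succ (r := 1 / 4) (by norm_num) (by norm_num)
  have hderiv := hasDerivAt_tsum_of_isPreconnected
    (hgeom.summable.mul_right (1 / (x / 2 * (8 * M)))) isOpen_Ioo isPreconnected_Ioo
    (g := fun n y => φ (n + 1) y / Real.log y ^ (n + 1)) (g' := g')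
    (fun n y hy => hasDerivAt_div_log_pow n (h.hasDerivAt_phi n y (hsub hy)) (hsub hy).1
      (hlog0 (hsub hy)))
    (fun n y hy => by
      refine (hg'le n (hsub hy)).trans ?_
      rw [div_eq_mul_one_div]
      gcongr
      exacts [(hsub hy).1.le, hy.1.le, hlog (hsub hy)])
    (y₀ := x) ⟨by linarith, hx.2⟩
    ((hasSum_geometric_succ (r := 1 / 8) (by norm_num) (by norm_num)).summable.of_norm_bounded
      fun n => abs_div_pow_le hM (h.abs_phi_le n x hx) (hlog hx))
    ⟨by linarith, hx.2⟩
  refine ⟨_, hderiv, ?_⟩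
  have hxlog : 0 < x * |Real.log x| := mul_pos hx0 (abs_pos.mpr (hlog0 hx))
  rw [← Real.norm_eq_abs]
  calc ‖∑' n, g' n x‖ ≤ 1 / 4 / (1 - 1 / 4) / (x * |Real.log x|) :=
        tsum_of_norm_bounded (hgeom.div_const _) fun n => hg'le n hx
    _ = 1 / (3 * x * |Real.log x|) := by field_simp; norm_num

lemma exists_hasDerivAt_one_add_logSeries_div_pos (h : LogSeriesBounds φ ψ M ε)
    (hx : x ∈ Ioo 0 ε) :
    ∃ D, HasDerivAt (fun y => (1 + logSeries φ y) / -Real.log y) D x ∧ 0 < D := by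
  have hL : 0 < -Real.log x := by
    linarith [eight_mul_le_neg_log hx.1 (hx.2.trans_le h.le_exp), h.pos]
  obtain ⟨D, hD, hDle⟩ := h.exists_hasDerivAt_logSeries hx
  have hS := abs_le.mp (h.abs_logSeries_le hx)
  refine ⟨_, (hD.const_add 1).div (Real.hasDerivAt_log hx.1.ne').neg hL.ne', ?_⟩
  have hDL : |D * -Real.log x| ≤ 1 / 3 * x⁻¹ := by
    rw [abs_mul, abs_of_pos hL, ← le_div_iff₀ hL]
    refine hDle.trans_eq ?_
    rw [abs_of_neg (neg_pos.mp hL)]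
    field_simp
  have hSx : 6 / 7 * x⁻¹ ≤ (1 + logSeries φ x) * x⁻¹ :=
    mul_le_mul_of_nonneg_right (by linarith) (inv_pos.mpr hx.1).le
  refine div_pos ?_ (by positivity)
  linarith [(abs_le.mp hDL).1, inv_pos.mpr hx.1]

lemma continuousOn_one_add_logSeries_div (h : LogSeriesBounds φ ψ M ε) :
    ContinuousOn (fun y => (1 + logSeries φ y) / -Real.log y) (Ioo 0 ε) := fun _ hy =>
  (h.exists_hasDerivAt_one_add_logSeries_div_pos hy).choose_spec.1.continuousAt.continuousWithinAt

lemma strictMonoOn_one_add_logSeries_div (h : LogSeriesBounds φ ψ M ε) :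
    StrictMonoOn (fun y => (1 + logSeries φ y) / -Real.log y) (Ioo 0 ε) := by
  refine strictMonoOn_of_deriv_pos (convex_Ioo 0 ε) h.continuousOn_one_add_logSeries_div
    fun y hy => ?_
  rw [interior_Ioo] at hy
  obtain ⟨D, hD, hpos⟩ := h.exists_hasDerivAt_one_add_logSeries_div_pos hy
  rwa [hD.deriv]

end LogSeriesBounds

lemma bijOn_Ioo_of_strictMonoOn {f : ℝ → ℝ} {b : ℝ} (hb : 0 < b) (hf : ContinuousOn f (Ioc 0 b))
    (hmono : StrictMonoOn f (Ioc 0 b)) (hlim : Tendsto f (𝓝[>] 0) (𝓝 0)) :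
    BijOn f (Ioo 0 b) (Ioo 0 (f b)) := by
  have hpos {x} (hx : x ∈ Ioc 0 b) : 0 < f x := by
    have hx2 : x / 2 ∈ Ioc 0 b := ⟨by linarith [hx.1], by linarith [hx.1, hx.2]⟩
    have hle : 0 ≤ f (x / 2) := le_of_tendsto hlim <| by
      filter_upwards [Ioo_mem_nhdsGT (half_pos hx.1)] with z hz
      exact hmono.le_iff_le ⟨hz.1, by linarith [hz.2, hx2.2]⟩ hx2 |>.mpr hz.2.le
    exact hle.trans_lt (hmono hx2 hx (by linarith [hx.1]))
  refine ⟨fun x hx => ⟨hpos ⟨hx.1, hx.2.le⟩, hmono ⟨hx.1, hx.2.le⟩ ⟨hb, le_rfl⟩ hx.2⟩,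
    hmono.injOn.mono Ioo_subset_Ioc_self, fun y hy => ?_⟩
  obtain ⟨t, hft, ht⟩ := ((hlim.eventually (gt_mem_nhds hy.1)).and (Ioo_mem_nhdsGT hb)).exists
  obtain ⟨z, hz, rfl⟩ :=
    intermediate_value_Ioo ht.2.le (hf.mono (Icc_subset_Ioc ht.1 le_rfl)) ⟨hft, hy.2⟩
  exact ⟨z, ⟨ht.1.trans hz.1, hz.2⟩, rfl⟩

noncomputable def realPhi (c : ℕ → ℕ → ℝ) (n : ℕ) (x : ℝ) : ℝ :=
  ∑' k : ℕ, c n k * x ^ k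

noncomputable def realPhiD (c : ℕ → ℕ → ℝ) (n : ℕ) (x : ℝ) : ℝ :=
  ∑' k : ℕ, ((k + 1 : ℕ) : ℝ) * c n (k + 1) * x ^ k

lemma Phi_ofReal (c : ℕ → ℕ → ℝ) (n : ℕ) (x : ℝ) : Phi c n x = realPhi c n x := by
  rw [Phi, realPhi, Complex.ofReal_tsum]
  push_cast
  rfl

lemma PhiD_ofReal (c : ℕ → ℕ → ℝ) (n : ℕ) (x : ℝ) : PhiD c n x = realPhiD c n x := by
  rw [PhiD, realPhiD, Complex.ofReal_tsum]
  push_cast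
  rfl

lemma fRep_ofReal (a : ℝ) (c : ℕ → ℕ → ℝ) {x : ℝ} (hx : 0 ≤ x) :
    fRep a c x = ↑(2 * Real.pi / a * ((1 + logSeries (realPhi c) x) / -Real.log x)) := by
  rw [fRep, logSeries, ← Complex.ofReal_log hx]
  push_cast [Complex.ofReal_tsum, Phi_ofReal]
  ring

lemma Admissible.exists_logSeriesBounds {a : ℝ} {c : ℕ → ℕ → ℝ} (hadm : Admissible a c) :
    ∃ M ε, 0 < ε ∧ LogSeriesBounds (realPhi c) (realPhiD c) M ε := by
  obtain ⟨-, ⟨B, hB⟩, ⟨r₁, hr₁, M₁, hM₁, hΦ⟩, ⟨r₂, hr₂, M₂, hM₂, hΦD⟩, -⟩ := hadm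
  set M := max M₁ M₂
  set B' := max B 1
  have hB' : 0 < B' := lt_max_of_lt_right one_pos
  set ε := min (min r₁ r₂) (min (1 / (2 * B')) (Real.exp (-(8 * M))))
  have hε : 0 < ε := by positivity
  have hεr₁ : ε ≤ r₁ := (min_le_left _ _).trans (min_le_left _ _)
  have hεr₂ : ε ≤ r₂ := (min_le_left _ _).trans (min_le_right _ _)
  have hεB : ε ≤ 1 / (2 * B') := (min_le_right _ _).trans (min_le_left _ _)
  have hnorm {x r} (hx : x ∈ Ioo 0 ε) (hεr : ε ≤ r) : ‖(x : ℂ)‖ ≤ r := by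
    rw [Complex.norm_real, Real.norm_of_nonneg hx.1.le]
    exact hx.2.le.trans hεr
  refine ⟨M, ε, hε, ⟨lt_max_of_lt_left hM₁, (min_le_right _ _).trans (min_le_right _ _),
    fun n x hx => ?_, fun n x hx => ?_, fun n x hx => ?_⟩⟩
  · have h := hΦ (n + 1) le_add_self x (hnorm hx hεr₁) (by simp)
    rw [Phi_ofReal, Complex.norm_real, Real.norm_eq_abs] at h
    exact h.trans (pow_le_pow_left₀ hM₁.le (le_max_left _ _) _)
  · have h := hΦD (n + 1) le_add_self x (hnorm hx hεr₂) (by simp)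
    rw [PhiD_ofReal, Complex.norm_real, Real.norm_eq_abs] at h
    exact h.trans (pow_le_pow_left₀ hM₂.le (le_max_right _ _) _)
  · refine hasDerivAt_tsum_mul_pow hB' (fun k hk => ?_) ⟨?_, hx.2.trans_le hεB⟩
    · exact abs_le_pow_of_rpow_one_div_le (by omega)
        ((hB (n + 1) le_add_self k hk).trans (le_max_left _ _))
    · linarith [hx.1, show 0 < 1 / (2 * B') by positivity]

/-- Lemma 1: an admissible representation is a one-to-one (strictly increasing)
parametrization of a real interval `(0, R')` for small `x > 0`. -/
theorem stmt2 (a : ℝ) (c : ℕ → ℕ → ℝ) (hadm : Admissible a c) :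
    ∃ ε > (0 : ℝ),
      (∀ x ∈ Set.Ioo (0 : ℝ) ε, (fRep a c (x : ℂ)).im = 0) ∧
      StrictMonoOn (fun x : ℝ => (fRep a c (x : ℂ)).re) (Set.Ioo 0 ε) ∧
      (∃ R' > (0 : ℝ),
        Set.BijOn (fun x : ℝ => (fRep a c (x : ℂ)).re) (Set.Ioo 0 ε) (Set.Ioo 0 R')) ∧
      Filter.Tendsto (fun x : ℝ => fRep a c (x : ℂ)) (nhdsWithin 0 (Set.Ioi 0)) (nhds 0) := by
  obtain ⟨M, ε, hε, hbounds⟩ := hadm.exists_logSeriesBounds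
  set g := fun y : ℝ => 2 * Real.pi / a * ((1 + logSeries (realPhi c) y) / -Real.log y)
  have hfg : EqOn (fun x : ℝ => fRep a c x) (fun x => (g x : ℂ)) (Ioi 0) :=
    fun x hx => fRep_ofReal a c (le_of_lt hx)
  have hre : EqOn g (fun x : ℝ => (fRep a c x).re) (Ioo 0 (ε / 2)) := fun x hx => by
    simp [hfg hx.1]
  have hpos : 0 < 2 * Real.pi / a := div_pos Real.two_pi_pos hadm.1
  have hmono : StrictMonoOn g (Ioo 0 ε) := fun x hx y hy hxy =>
    mul_lt_mul_of_pos_left (hbounds.strictMonoOn_one_add_logSeries_div hx hy hxy) hpos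
  have hlim : Tendsto g (𝓝[>] 0) (𝓝 0) := by
    simpa using (hbounds.tendsto_one_add_logSeries_div hε).const_mul (2 * Real.pi / a)
  have hsub : Ioc 0 (ε / 2) ⊆ Ioo 0 ε := fun x hx => ⟨hx.1, by linarith [hx.2]⟩
  have hbij := bijOn_Ioo_of_strictMonoOn (half_pos hε)
    (continuousOn_const.mul (hbounds.continuousOn_one_add_logSeries_div.mono hsub))
    (hmono.mono hsub) hlim
  refine ⟨ε / 2, half_pos hε, fun x hx => by simp [hfg hx.1],
    (hmono.mono (Ioo_subset_Ioc_self.trans hsub)).congr hre,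
    ⟨g (ε / 2), ?_, hbij.congr hre⟩, ?_⟩
  · have h := hbij.mapsTo (x := ε / 4) ⟨by positivity, by linarith⟩
    exact h.1.trans h.2
  · have h := (Complex.continuous_ofReal.tendsto 0).comp hlim
    rw [Complex.ofReal_zero] at h
    exact h.congr' (eventually_nhdsWithin_of_forall fun x hx => (hfg hx).symm)
end

section
/- Fix α > 0 and let f be the function determined by 1/f(z) = (1/(2π))·[ log((z+α)/z) + (2π−α)/(z+α) ] for z in the upper half-plane near 0. Then there exist real coefficients c_{n,k} (n ≥ 1, k ≥ 0) and r > 0 such that for each n ≥ 1 the power series Φ_n(z) = Σ_{k≥0} c_{n,k} z^k converges for |z| < r, the double series Σ_{n≥1} Φ_n(z)/(log z)^n converges for 0 < |z| < r with Im z ≥ 0, and f(z) = (−2π/log z)·(1 + Σ_{n=1}^∞ Σ_{k=0}^∞ c_{n,k} z^k/(log z)^n) there. -/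
/-!
Write `g(z) = log (z + α) + (2π - α) / (z + α)` (`csRegularPart α`), so that `2π / f = g - log z`.
The function `g` is holomorphic on `‖z‖ < α` with real Taylor coefficients, hence bounded near `0`,
while `‖log z‖ ≥ |log ‖z‖| → ∞`. Near `0` we may therefore expand
`f = -2π / log z · 1 / (1 - g / log z) = -2π / log z · Σ_{n ≥ 0} (g / log z)^n`,
i.e. `Φ_n = g^n`, and `c_{n,k}` is the `k`-th Taylor coefficient of `g^n`, a Cauchy power of the
real Taylor series of `g`.
-/

open Complex Filter Topology

/-- The Christoffel–Schwarz map `f` of the paper: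
`1/f(z) = (1/(2π))·[log(z+α) − log z + (2π−α)/(z+α)]`, where `Complex.log`
is the branch with `log i = iπ/2` (the continuous extension to the real axis from above,
with `log((z+α)/z) = log(z+α) − log z` on the upper half-plane). -/
noncomputable def fCS (α : ℝ) (z : ℂ) : ℂ :=
  2 * (Real.pi : ℂ) /
    (Complex.log (z + (α : ℂ)) - Complex.log z + ((2 * Real.pi - α : ℝ) : ℂ) / (z + (α : ℂ)))

open PowerSeries Finset.HasAntidiagonal

section Evaluation

variable {φ ψ : ℝ⟦X⟧} {z : ℂ}

theorem ofReal_coeff_mul_mul_pow (k : ℕ) :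
    ((coeff k (φ * ψ) : ℝ) : ℂ) * z ^ k =
      ∑ p ∈ antidiagonal k,
        (((coeff p.1 φ : ℝ) : ℂ) * z ^ p.1) * (((coeff p.2 ψ : ℝ) : ℂ) * z ^ p.2) := by
  rw [coeff_mul, ofReal_sum, Finset.sum_mul]
  refine Finset.sum_congr rfl fun p hp => ?_
  rw [← mem_antidiagonal.mp hp, pow_add, ofReal_mul]
  ring

theorem summable_norm_coeff_pow_mul_pow (hφ : Summable fun k => ‖((coeff k φ : ℝ) : ℂ) * z ^ k‖)
    (n : ℕ) : Summable fun k => ‖((coeff k (φ ^ n) : ℝ) : ℂ) * z ^ k‖ := by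
  induction n with
  | zero =>
    refine summable_of_ne_finset_zero (s := {0}) fun k hk => ?_
    simp_all [coeff_one]
  | succ n ih =>
    simp_rw [pow_succ, ofReal_coeff_mul_mul_pow]
    exact summable_norm_sum_mul_antidiagonal_of_summable_norm
      (f := fun k => ((coeff k (φ ^ n) : ℝ) : ℂ) * z ^ k)
      (g := fun k => ((coeff k φ : ℝ) : ℂ) * z ^ k)
      ih hφ

theorem tsum_coeff_pow_mul_pow (hφ : Summable fun k => ‖((coeff k φ : ℝ) : ℂ) * z ^ k‖) (n : ℕ) :
    ∑' k, ((coeff k (φ ^ n) : ℝ) : ℂ) * z ^ k = (∑' k, ((coeff k φ : ℝ) : ℂ) * z ^ k) ^ n := by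
  induction n with
  | zero => simp [coeff_one, apply_ite (fun x : ℝ => (x : ℂ)), ite_mul]
  | succ n ih =>
    simp_rw [pow_succ, ofReal_coeff_mul_mul_pow, ← ih]
    exact (tsum_mul_tsum_eq_tsum_sum_antidiagonal_of_summable_norm
      (summable_norm_coeff_pow_mul_pow hφ n) hφ).symm

end Evaluation

theorem hasSum_pow_succ_div_pow_succ {𝕜 : Type*} [NormedField 𝕜] [CompleteSpace 𝕜] {a b : 𝕜}
    (h : ‖a‖ < ‖b‖) : HasSum (fun n : ℕ => a ^ (n + 1) / b ^ (n + 1)) (a / (b - a)) := by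
  have hb : b ≠ 0 := norm_pos_iff.mp ((norm_nonneg a).trans_lt h)
  have hq : ‖a / b‖ < 1 := by rwa [norm_div, div_lt_one ((norm_nonneg a).trans_lt h)]
  have hterm : (fun n : ℕ => a ^ (n + 1) / b ^ (n + 1)) = fun n => a / b * (a / b) ^ n :=
    funext fun n => by rw [← pow_succ', div_pow]
  have hsum : a / (b - a) = a / b * (1 - a / b)⁻¹ := by field_simp
  rw [hterm, hsum]
  exact (hasSum_geometric_of_norm_lt_one hq).mul_left (a / b)

theorem tendsto_norm_log_nhdsNE_zero : Tendsto (fun z : ℂ => ‖log z‖) (𝓝[≠] 0) atTop := by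
  refine tendsto_atTop_mono (fun z => (abs_re_le_norm (log z)).trans' (le_of_eq ?_))
    (tendsto_abs_atBot_atTop.comp (Real.tendsto_log_nhdsGT_zero.comp tendsto_norm_nhdsNE_zero))
  simp [log_re]

theorem eventually_norm_lt_norm_log {E : Type*} [SeminormedAddCommGroup E] {g : ℂ → E}
    (hg : ContinuousAt g 0) : ∀ᶠ z in 𝓝[≠] 0, ‖g z‖ < ‖log z‖ := by
  have hbound : ∀ᶠ z in 𝓝[≠] 0, ‖g z‖ < ‖g 0‖ + 1 :=
    nhdsWithin_le_nhds (hg.norm.eventually (gt_mem_nhds (lt_add_one _)))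
  filter_upwards [hbound, tendsto_atTop.mp tendsto_norm_log_nhdsNE_zero (‖g 0‖ + 1)]
    with z hz hlog using hz.trans_le hlog

noncomputable def csRegularPart (α : ℝ) (z : ℂ) : ℂ :=
  log (z + α) + ((2 * Real.pi - α : ℝ) : ℂ) / (z + α)

/-- The Taylor series of `csRegularPart α` at `0`, read off from
`csRegularPart α z = log α + log (1 + w) + (2π - α) / α · 1 / (1 + w)` with `w = z / α`. -/
noncomputable def csSeries (α : ℝ) : ℝ⟦X⟧ :=
  mk fun k => (if k = 0 then Real.log α else 0) + (-1) ^ (k + 1) / (k * α ^ k) +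
    (2 * Real.pi - α) * (-1) ^ k / α ^ (k + 1)

section csSeries

variable {α : ℝ} {z : ℂ}

theorem ofReal_coeff_csSeries_mul_pow (hα : α ≠ 0) (k : ℕ) :
    ((coeff k (csSeries α) : ℝ) : ℂ) * z ^ k =
      (if k = 0 then (Real.log α : ℂ) else 0) + (-1) ^ (k + 1) * (z / α) ^ k / k +
        ((2 * Real.pi - α : ℝ) : ℂ) / α * (-(z / α)) ^ k := by
  have hα' : (α : ℂ) ≠ 0 := ofReal_ne_zero.mpr hα
  rcases k.eq_zero_or_pos with rfl | hk
  · simp only [csSeries, coeff_mk]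
    push_cast
    simp
  · have hk' : (k : ℂ) ≠ 0 := Nat.cast_ne_zero.mpr hk.ne'
    simp only [csSeries, coeff_mk, if_neg hk.ne']
    push_cast
    simp only [neg_pow (z / α), div_pow]
    field_simp
    ring

theorem summable_norm_coeff_csSeries_mul_pow (hα : 0 < α) (hz : ‖z‖ < α) :
    Summable fun k => ‖((coeff k (csSeries α) : ℝ) : ℂ) * z ^ k‖ := by
  have hw : ‖z / α‖ < 1 := by
    rwa [norm_div, norm_real, Real.norm_of_nonneg hα.le, div_lt_one hα]
  have hgeom := summable_geometric_of_lt_one (norm_nonneg _) hw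
  refine Summable.of_nonneg_of_le (fun _ => norm_nonneg _) (fun k => ?_)
    (((summable_of_ne_finset_zero (s := {0})
      (f := fun k : ℕ => if k = 0 then |Real.log α| else 0) (by simp_all)).add hgeom).add
      (hgeom.mul_left ‖((2 * Real.pi - α : ℝ) : ℂ) / α‖))
  rw [ofReal_coeff_csSeries_mul_pow hα.ne']
  refine le_trans (norm_add₃_le ..) (add_le_add_three ?_ ?_ ?_)
  · split_ifs <;> simp
  · simp only [norm_div, norm_mul, norm_pow, norm_neg, norm_one, one_pow, one_mul, norm_natCast]
    rcases k.eq_zero_or_pos with rfl | hk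
    · simp
    · exact div_le_self (by positivity) (Nat.one_le_cast.mpr hk)
  · rw [norm_mul, norm_pow, norm_neg]

theorem hasSum_coeff_csSeries_mul_pow (hα : 0 < α) (hz : ‖z‖ < α) :
    HasSum (fun k => ((coeff k (csSeries α) : ℝ) : ℂ) * z ^ k) (csRegularPart α z) := by
  have hα' : (α : ℂ) ≠ 0 := ofReal_ne_zero.mpr hα.ne'
  have hw : ‖z / α‖ < 1 := by
    rwa [norm_div, norm_real, Real.norm_of_nonneg hα.le, div_lt_one hα]
  have hw1 : 1 + z / α ≠ 0 := by
    intro h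
    rw [← neg_eq_of_add_eq_zero_right h, norm_neg, norm_one] at hw
    exact lt_irrefl _ hw
  have hsplit : z + α = α * (1 + z / α) := by field_simp; ring
  have hval : csRegularPart α z = Real.log α + log (1 + z / α) +
      ((2 * Real.pi - α : ℝ) : ℂ) / α * (1 - -(z / α))⁻¹ := by
    rw [csRegularPart, hsplit, log_ofReal_mul hα hw1, sub_neg_eq_add, div_mul_eq_div_div,
      div_eq_mul_inv _ (1 + z / α)]
  have hsum := ((hasSum_ite_eq 0 (Real.log α : ℂ)).add (hasSum_taylorSeries_log hw)).add
    ((hasSum_geometric_of_norm_lt_one (ξ := -(z / α)) (by rwa [norm_neg])).mul_left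
      (((2 * Real.pi - α : ℝ) : ℂ) / α))
  rw [hval]
  exact (funext fun k => ofReal_coeff_csSeries_mul_pow (z := z) hα.ne' k) ▸ hsum

theorem continuousAt_csRegularPart (hα : 0 < α) : ContinuousAt (csRegularPart α) 0 := by
  have hα' : (0 : ℂ) + α ≠ 0 := by simpa using hα.ne'
  refine ((continuousAt_id.add continuousAt_const).clog ?_).add
    (continuousAt_const.div (continuousAt_id.add continuousAt_const) hα')
  simpa using hα

end csSeries

/-- The Christoffel–Schwarz map admits a generalized power series expansion
`f(z) = (−2π/log z)·(1 + Σ_{n≥1} Σ_{k≥0} c_{n,k} z^k/(log z)^n)` near `0`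
in the closed upper half-plane. -/
theorem stmt7 (α : ℝ) (hα : 0 < α) :
    ∃ c : ℕ → ℕ → ℝ, ∃ r > (0 : ℝ),
      (∀ n : ℕ, 1 ≤ n → ∀ z : ℂ, ‖z‖ < r →
        Summable (fun k : ℕ => (c n k : ℂ) * z ^ k)) ∧
      (∀ z : ℂ, 0 < ‖z‖ → ‖z‖ < r → 0 ≤ z.im →
        Summable (fun n : ℕ => Phi c (n + 1) z / (Complex.log z) ^ (n + 1)) ∧
        fCS α z = (-(2 * (Real.pi : ℂ)) / Complex.log z) *
          (1 + ∑' n : ℕ, Phi c (n + 1) z / (Complex.log z) ^ (n + 1))) := by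
  obtain ⟨ε, hε, hsmall⟩ := Metric.eventually_nhds_iff.mp <| eventually_nhdsWithin_iff.mp <|
    eventually_norm_lt_norm_log (continuousAt_csRegularPart hα)
  refine ⟨fun n k => coeff k (csSeries α ^ n), min ε α, lt_min hε hα, fun n _ z hz => ?_,
    fun z hz0 hz _ => ?_⟩
  · exact (summable_norm_coeff_pow_mul_pow
      (summable_norm_coeff_csSeries_mul_pow hα (hz.trans_le (min_le_right _ _))) n).of_norm
  have hzα : ‖z‖ < α := hz.trans_le (min_le_right _ _)
  have hlog : ‖csRegularPart α z‖ < ‖log z‖ :=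
    hsmall (by simpa using hz.trans_le (min_le_left _ _)) (norm_pos_iff.mp hz0)
  have hPhi (n : ℕ) : Phi (fun n k => coeff k (csSeries α ^ n)) n z = csRegularPart α z ^ n := by
    rw [Phi, tsum_coeff_pow_mul_pow (summable_norm_coeff_csSeries_mul_pow hα hzα),
      (hasSum_coeff_csSeries_mul_pow hα hzα).tsum_eq]
  have hsum := hasSum_pow_succ_div_pow_succ hlog
  simp_rw [← hPhi] at hsum
  refine ⟨hsum.summable, ?_⟩
  have hL : log z ≠ 0 := norm_pos_iff.mp ((norm_nonneg _).trans_lt hlog)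
  have hLG : log z - csRegularPart α z ≠ 0 := sub_ne_zero.mpr fun h => hlog.ne (by rw [h])
  have hGL : csRegularPart α z - log z ≠ 0 := sub_ne_zero.mpr fun h => hlog.ne (by rw [h])
  rw [hsum.tsum_eq, fCS, sub_add_eq_add_sub, ← csRegularPart]
  field_simp
  ring
end

section
/- Let f be given by an admissible representation f(z) = (−2π/(a·log z))·(1 + Σ_{n≥1} Φ_n(z)/(log z)^n), and for x < 0 write f(x) = u(x) + i·v(x) (boundary values from the upper half-plane, log x = log|x| + iπ). Then v(x) = (a/2)·u(x)² + o(u(x)²) as x → 0⁻; that is, the curve Γ = { f(x) : x ∈ (−ε, 0) } has first-order tangency to the real axis at the origin with curvature a at 0. -/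
open Complex Filter Topology

/-!
Since `Im (1 / w) = -Im w / ‖w‖²`, the circle of curvature `κ` tangent to `ℝ` at `0` is the
level set `Im (1 / w) = -κ / 2`; so a curve `w → 0` along which `Im (1 / w) → -κ / 2` satisfies
`Im w = (κ / 2) (Re w)² + o((Re w)²)`. For `x < 0` we have `log x = log |x| + iπ` and
`1 / f = -(a / 2π) · log x / (1 + S)` with `S = Φ₁(x) / log x + O(1 / (log x)²)`. As `Φ₁(x)` is
real, `Im (log x / (1 + S)) = π + O(1 / |log x|)`, hence `Im (1 / f) → -a / 2`.
-/

open Asymptotics Bornology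

theorem norm_tsum_div_pow_succ_sub_le {b : ℕ → ℂ} {M : ℝ} {L : ℂ}
    (hb : ∀ n, ‖b n‖ ≤ M ^ (n + 1)) (hL : 2 * M ≤ ‖L‖) :
    ‖∑' n, b n / L ^ (n + 1) - b 0 / L‖ ≤ 2 * (M / ‖L‖) ^ 2 := by
  rcases eq_or_ne L 0 with rfl | hL0
  · simp
  set q := M / ‖L‖
  have hq0 : 0 ≤ q := div_nonneg ((norm_nonneg _).trans (by simpa using hb 0)) (norm_nonneg _)
  have hq : q ≤ 1 / 2 := by
    rw [div_le_iff₀ (norm_pos_iff.2 hL0)]; linarith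
  have hterm : ∀ n, ‖b n / L ^ (n + 1)‖ ≤ q ^ (n + 1) := fun n => by
    rw [norm_div, norm_pow, div_pow]
    gcongr
    exact hb n
  have hsum : Summable fun n => b n / L ^ (n + 1) :=
    .of_norm_bounded ((summable_geometric_of_lt_one hq0 (by linarith)).mul_left q) fun n =>
      (hterm n).trans_eq (pow_succ' q n)
  rw [hsum.tsum_eq_zero_add, zero_add, pow_one, add_sub_cancel_left]
  have hgeom := (hasSum_geometric_of_lt_one hq0 (by linarith : q < 1)).mul_left (q ^ 2)
  calc ‖∑' n, b (n + 1) / L ^ (n + 1 + 1)‖ ≤ q ^ 2 * (1 - q)⁻¹ :=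
        tsum_of_norm_bounded hgeom fun n => (hterm (n + 1)).trans_eq (by ring)
    _ ≤ q ^ 2 * 2 := by
        gcongr
        rw [inv_le_comm₀ (by linarith) two_pos]; linarith
    _ = 2 * q ^ 2 := mul_comm _ _

theorem isLittleO_im_sub_mul_re_sq {α : Type*} {l : Filter α} {f : α → ℂ} {κ : ℝ}
    (hf : Tendsto f l (𝓝 0)) (hinv : Tendsto (fun x => (f x)⁻¹.im) l (𝓝 (-(κ / 2)))) :
    (fun x => (f x).im - κ / 2 * (f x).re ^ 2) =o[l] fun x => (f x).re ^ 2 := by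
  have him : ∀ x, (f x).im = -(f x)⁻¹.im * normSq (f x) := fun x => by
    rcases eq_or_ne (f x) 0 with h | h
    · simp [h]
    · rw [inv_im, neg_div, neg_neg, div_mul_cancel₀ _ (normSq_pos.2 h).ne']
  have him_tendsto : Tendsto (fun x => (f x).im) l (𝓝 0) :=
    (continuous_im.tendsto' 0 0 zero_im).comp hf
  have him_sub : (fun x => (f x).im - κ / 2 * normSq (f x)) =o[l] fun x => normSq (f x) := by
    have h : Tendsto (fun x => (f x)⁻¹.im + κ / 2) l (𝓝 0) := by
      simpa using hinv.add_const (κ / 2)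
    refine (((isLittleO_one_iff ℝ).2 h).neg_left.mul_isBigO (isBigO_refl _ l)).congr
      (fun x => ?_) (fun x => one_mul _)
    rw [him x]; ring
  have him_sq : (fun x => (f x).im ^ 2) =o[l] fun x => normSq (f x) := by
    have h : (fun x => (f x).im) =O[l] fun x => normSq (f x) :=
      ((hinv.isBigO_one ℝ).neg_left.mul (isBigO_refl _ l)).congr (fun x => (him x).symm)
        (fun x => one_mul _)
    refine (h.mul_isLittleO ((isLittleO_one_iff ℝ).2 him_tendsto)).congr
      (fun x => (sq _).symm) (fun x => mul_one _)
  have hnormSq : (fun x => normSq (f x)) =O[l] fun x => (f x).re ^ 2 :=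
    him_sq.neg_left.right_isBigO_add.congr_right fun x => by rw [normSq_apply]; ring
  refine ((him_sub.add (him_sq.const_mul_left (κ / 2))).congr_left fun x => ?_).trans_isBigO
    hnormSq
  rw [normSq_apply]; ring

section
variable {α : Type*} {l : Filter α} {L S : α → ℂ} {p : α → ℝ}

theorem tendsto_zero_of_isBigO_inv_sq (hL : Tendsto L l (cobounded ℂ))
    (hp : IsBoundedUnder (· ≤ ·) l fun x => |p x|)
    (hS : (fun x => S x - p x / L x) =O[l] fun x => (L x)⁻¹ ^ 2) :
    Tendsto S l (𝓝 0) := by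
  have hLinv : Tendsto (fun x => (L x)⁻¹) l (𝓝 0) := tendsto_inv₀_cobounded.comp hL
  have hpL : Tendsto (fun x => (L x)⁻¹ * p x) l (𝓝 0) :=
    hLinv.zero_mul_isBoundedUnder_le (by simpa [Function.comp_def] using hp)
  have hrem : Tendsto (fun x => S x - p x / L x) l (𝓝 0) :=
    hS.trans_tendsto (by simpa using hLinv.pow 2)
  simpa [div_eq_inv_mul] using hrem.add hpL

theorem tendsto_im_div_one_add {θ : ℝ} (hL : Tendsto L l (cobounded ℂ))
    (hLim : Tendsto (fun x => (L x).im) l (𝓝 θ))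
    (hp : IsBoundedUnder (· ≤ ·) l fun x => |p x|)
    (hS : (fun x => S x - p x / L x) =O[l] fun x => (L x)⁻¹ ^ 2) :
    Tendsto (fun x => (L x / (1 + S x)).im) l (𝓝 θ) := by
  have hLinv : Tendsto (fun x => (L x)⁻¹) l (𝓝 0) := tendsto_inv₀_cobounded.comp hL
  have hS1 : Tendsto (fun x => 1 + S x) l (𝓝 1) := by
    simpa using tendsto_const_nhds.add (tendsto_zero_of_isBigO_inv_sq hL hp hS)
  have hT : Tendsto (fun x => (1 + S x)⁻¹) l (𝓝 1) := by simpa using hS1.inv₀ one_ne_zero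
  -- `L S = p + O(1 / L)` with `p` real, so `L S / (1 + S)` has imaginary part `o(1)`.
  have hε : Tendsto (fun x => L x * S x - p x) l (𝓝 0) := by
    refine (((isBigO_refl L l).mul hS).congr' ?_ ?_).trans_tendsto hLinv
    · filter_upwards [hL.eventually_ne_cobounded 0] with x hx
      field_simp
    · filter_upwards [hL.eventually_ne_cobounded 0] with x hx
      field_simp
  have hpT : Tendsto (fun x => ((1 + S x)⁻¹).im * p x) l (𝓝 0) :=
    ((continuous_im.tendsto' 1 0 one_im).comp hT).zero_mul_isBoundedUnder_le
      (by simpa [Function.comp_def] using hp)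
  have hεT : Tendsto (fun x => ((L x * S x - p x) * (1 + S x)⁻¹).im) l (𝓝 0) :=
    (continuous_im.tendsto' 0 0 zero_im).comp (by simpa using hε.mul hT)
  refine ((hLim.sub hpT).sub hεT).congr' ?_ |>.mono_right (by simp)
  filter_upwards [hS1.eventually_ne one_ne_zero] with x hx
  have hLS : L x / (1 + S x) = L x - p x * (1 + S x)⁻¹ - (L x * S x - p x) * (1 + S x)⁻¹ := by
    field_simp
    ring
  rw [hLS, sub_im, sub_im, im_ofReal_mul, mul_comm]

theorem isLittleO_im_sub_mul_re_sq_of_expansion (a : ℝ) (hL : Tendsto L l (cobounded ℂ))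
    (hLim : Tendsto (fun x => (L x).im) l (𝓝 Real.pi))
    (hp : IsBoundedUnder (· ≤ ·) l fun x => |p x|)
    (hS : (fun x => S x - p x / L x) =O[l] fun x => (L x)⁻¹ ^ 2) :
    (fun x => ((-(2 * Real.pi : ℂ)) / (a * L x) * (1 + S x)).im
        - a / 2 * ((-(2 * Real.pi : ℂ)) / (a * L x) * (1 + S x)).re ^ 2) =o[l]
      fun x => ((-(2 * Real.pi : ℂ)) / (a * L x) * (1 + S x)).re ^ 2 := by
  refine isLittleO_im_sub_mul_re_sq ?_ ?_
  · have h := tendsto_const_nhds (x := -(2 * (Real.pi : ℂ)) / a) |>.mul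
      ((tendsto_inv₀_cobounded.comp hL).mul
        ((tendsto_const_nhds (x := (1 : ℂ))).add (tendsto_zero_of_isBigO_inv_sq hL hp hS)))
    simp only [mul_zero, zero_mul] at h
    refine h.congr fun x => ?_
    simp only [Function.comp_apply]
    ring
  · have h := (tendsto_im_div_one_add hL hLim hp hS).const_mul (-(a / (2 * Real.pi)))
    rw [show -(a / (2 * Real.pi)) * Real.pi = -(a / 2) by field_simp] at h
    refine h.congr fun x => ?_
    rw [← im_ofReal_mul, mul_inv, inv_div, div_eq_mul_inv (L x)]
    push_cast
    ring_nf
end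

theorem Phi_ofReal_s9 (c : ℕ → ℕ → ℝ) (n : ℕ) (x : ℝ) :
    Phi c n (x : ℂ) = ((∑' k, c n k * x ^ k : ℝ) : ℂ) := by
  simp [Phi, ofReal_tsum]

theorem isBigO_tsum_Phi_div_pow_sub {c : ℕ → ℕ → ℝ} {r M : ℝ}
    (hΦ : ∀ n : ℕ, 1 ≤ n → ∀ z : ℂ, ‖z‖ ≤ r → 0 ≤ z.im → ‖Phi c n z‖ ≤ M ^ n)
    {l : Filter ℝ} {L : ℝ → ℂ} (hr : ∀ᶠ x : ℝ in l, ‖(x : ℂ)‖ ≤ r)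
    (hL : Tendsto L l (cobounded ℂ)) :
    (fun x : ℝ => ∑' n : ℕ, Phi c (n + 1) x / L x ^ (n + 1) - (∑' k, c 1 k * x ^ k : ℝ) / L x)
      =O[l] fun x => (L x)⁻¹ ^ 2 := by
  refine .of_bound (2 * M ^ 2) ?_
  filter_upwards [hr, (tendsto_norm_atTop_iff_cobounded.2 hL).eventually_ge_atTop (2 * M)]
    with x hx hLx
  have h := norm_tsum_div_pow_succ_sub_le (b := fun n => Phi c (n + 1) x)
    (fun n => hΦ (n + 1) n.succ_pos x hx (by simp)) hLx
  rw [zero_add, Phi_ofReal_s9] at h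
  refine h.trans_eq ?_
  rw [norm_pow, norm_inv, div_pow]
  ring

theorem tendsto_log_ofReal_nhdsNE_zero :
    Tendsto (fun x : ℝ => log (x : ℂ)) (𝓝[≠] 0) (cobounded ℂ) := by
  refine tendsto_norm_atTop_iff_cobounded.1 <| tendsto_atTop_mono (fun x => ?_)
    (tendsto_abs_atBot_atTop.comp Real.tendsto_log_nhdsNE_zero)
  simpa only [Function.comp_apply, log_ofReal_re] using abs_re_le_norm (log (x : ℂ))

/-- For an admissible representation, `v(x) = (a/2)·u(x)² + o(u(x)²)` as `x → 0⁻`: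
the curve `Γ` has first-order tangency to `ℝ` at `0` with curvature `a`. -/
theorem stmt9 (a : ℝ) (c : ℕ → ℕ → ℝ) (hadm : Admissible a c) :
    (fun x : ℝ => (fRep a c (x : ℂ)).im - (a / 2) * ((fRep a c (x : ℂ)).re) ^ 2)
      =o[nhdsWithin 0 (Set.Iio (0 : ℝ))] (fun x : ℝ => ((fRep a c (x : ℂ)).re) ^ 2) := by
  obtain ⟨-, -, ⟨r, hr, M, -, hΦ⟩, -, -⟩ := hadm
  set L : ℝ → ℂ := fun x => log (x : ℂ)
  set S : ℝ → ℂ := fun x => ∑' n : ℕ, Phi c (n + 1) x / L x ^ (n + 1)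
  set p : ℝ → ℝ := fun x => ∑' k, c 1 k * x ^ k
  have hL : Tendsto L (𝓝[<] 0) (cobounded ℂ) :=
    tendsto_log_ofReal_nhdsNE_zero.mono_left (nhdsWithin_mono _ fun _ h => ne_of_lt h)
  have hLim : Tendsto (fun x => (L x).im) (𝓝[<] 0) (𝓝 Real.pi) :=
    tendsto_const_nhds.congr' <| eventually_mem_nhdsWithin.mono fun x hx => by
      simp only [L, log_im, arg_ofReal_of_neg hx]
  have hr' : ∀ᶠ x : ℝ in 𝓝[<] 0, ‖(x : ℂ)‖ ≤ r :=
    nhdsWithin_le_nhds <| mem_of_superset (Metric.closedBall_mem_nhds 0 hr) fun x hx => by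
      simpa using hx
  have hp : IsBoundedUnder (· ≤ ·) (𝓝[<] 0) fun x => |p x| := by
    refine ⟨M, eventually_map.2 (hr'.mono fun x hx => ?_)⟩
    simpa [p, Phi_ofReal_s9] using hΦ 1 le_rfl x hx (by simp)
  have hS : (fun x => S x - p x / L x) =O[𝓝[<] 0] fun x => (L x)⁻¹ ^ 2 :=
    isBigO_tsum_Phi_div_pow_sub hΦ hr' hL
  exact isLittleO_im_sub_mul_re_sq_of_expansion a hL hLim hp hS
end

section
/- Let f be given by an admissible representation f(z) = (−2π/(a·log z))·(1 + Σ_{n≥1} Φ_n(z)/(log z)^n). Then there exists ε > 0 such that f is injective on the punctured closed half-disk { z ∈ ℂ : 0 < |z| ≤ ε, Im z ≥ 0 }; in particular f is univalent on the open half-disk D⁺_ε = { z : |z| < ε, Im z > 0 }. -/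
open Complex Filter Topology

/-!
Write `L = log z` and `fRep a c z = -2π/(a L) · (1 + S(z))` with `S(z) = Σ Φ_{n+1}(z) / L^{n+1}`.
For `0 < |z| ≤ ε` the real part of `L` is very negative, so `|S| ≤ 1/2`, and `S` is Lipschitz in
`L` with a small constant: moving `z = exp L` costs a factor `ε` in each `Φ_n` (whose Taylor
coefficients grow at most geometrically), and moving `L` changes `L^{-n-1}` by a factor `|L|^{-2}`.
An equality `fRep a c z₁ = fRep a c z₂` means `(L₂ - L₁)(1 + S₁) = L₁ (S₂ - S₁)`. When
`|L₁| ≤ |L₂|`, the modulus `|L₁|` exceeds `min (-Re L₁) (-Re L₂)` by at most `π`, so the right-hand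
side is at most `|L₂ - L₁| / 4` while the left-hand side is at least `|L₂ - L₁| / 2`; hence
`L₁ = L₂` and `z₁ = z₂`.
-/

lemma norm_pow_succ_sub_pow_succ_le (k : ℕ) {e : ℝ} {z w : ℂ} (hz : ‖z‖ ≤ e) (hw : ‖w‖ ≤ e) :
    ‖z ^ (k + 1) - w ^ (k + 1)‖ ≤ (k + 1) * e ^ k * ‖z - w‖ := by
  have hderiv : ∀ x ∈ Metric.closedBall (0 : ℂ) e, HasDerivWithinAt (fun x => x ^ (k + 1))
      (((k + 1 : ℕ) : ℂ) * x ^ k) (Metric.closedBall 0 e) x := fun x _ => by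
    simpa using (hasDerivAt_pow (k + 1) x).hasDerivWithinAt
  have hbound : ∀ x ∈ Metric.closedBall (0 : ℂ) e,
      ‖((k + 1 : ℕ) : ℂ) * x ^ k‖ ≤ (k + 1) * e ^ k := fun x hx => by
    rw [norm_mul, norm_pow, Complex.norm_natCast]
    push_cast
    gcongr
    simpa using hx
  simpa using (convex_closedBall (0 : ℂ) e).norm_image_sub_le_of_norm_hasDerivWithin_le hderiv
    hbound (by simpa using hw) (by simpa using hz)

lemma norm_inv_pow_succ_sub_inv_pow_succ_le (n : ℕ) {t : ℝ} (ht : 0 < t) {x y : ℂ}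
    (hx : t ≤ ‖x‖) (hy : t ≤ ‖y‖) :
    ‖(x ^ (n + 1))⁻¹ - (y ^ (n + 1))⁻¹‖ ≤ (n + 1) / t ^ (n + 2) * ‖x - y‖ := by
  have hx₀ : x ≠ 0 := norm_pos_iff.1 (ht.trans_le hx)
  have hy₀ : y ≠ 0 := norm_pos_iff.1 (ht.trans_le hy)
  have hinv : ∀ u : ℂ, t ≤ ‖u‖ → ‖u⁻¹‖ ≤ t⁻¹ := fun u hu => by
    rw [norm_inv]; exact inv_anti₀ ht hu
  have hsub : ‖x⁻¹ - y⁻¹‖ ≤ ‖x - y‖ / t ^ 2 := by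
    rw [inv_sub_inv' hx₀ hy₀, norm_mul, norm_mul, norm_sub_rev, div_eq_mul_inv, sq, mul_inv]
    calc ‖x⁻¹‖ * ‖x - y‖ * ‖y⁻¹‖ ≤ t⁻¹ * ‖x - y‖ * t⁻¹ := by
          gcongr
          · exact hinv x hx
          · exact hinv y hy
      _ = ‖x - y‖ * (t⁻¹ * t⁻¹) := by ring
  calc ‖(x ^ (n + 1))⁻¹ - (y ^ (n + 1))⁻¹‖ = ‖x⁻¹ ^ (n + 1) - y⁻¹ ^ (n + 1)‖ := by
        rw [inv_pow, inv_pow]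
    _ ≤ (n + 1) * t⁻¹ ^ n * ‖x⁻¹ - y⁻¹‖ :=
        norm_pow_succ_sub_pow_succ_le n (hinv x hx) (hinv y hy)
    _ ≤ (n + 1) * t⁻¹ ^ n * (‖x - y‖ / t ^ 2) := by gcongr
    _ = (n + 1) / t ^ (n + 2) * ‖x - y‖ := by rw [inv_pow]; field_simp; ring

lemma norm_exp_sub_exp_le {t : ℝ} {z w : ℂ} (hz : z.re ≤ t) (hw : w.re ≤ t) :
    ‖exp z - exp w‖ ≤ Real.exp t * ‖z - w‖ :=
  (convex_halfSpace_re_le t).norm_image_sub_le_of_norm_hasDerivWithin_le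
    (fun x _ => (hasDerivAt_exp x).hasDerivWithinAt)
    (fun x hx => by rw [norm_exp]; exact Real.exp_le_exp.2 hx) hw hz

lemma re_log_le_of_norm_le {ε : ℝ} {z : ℂ} (hz₀ : z ≠ 0) (hz : ‖z‖ ≤ ε) :
    (log z).re ≤ Real.log ε := by
  rw [log_re]
  exact Real.log_le_log (norm_pos_iff.2 hz₀) hz

lemma norm_sub_le_mul_norm_log_sub {ε : ℝ} {z w : ℂ} (hz₀ : z ≠ 0) (hw₀ : w ≠ 0)
    (hz : ‖z‖ ≤ ε) (hw : ‖w‖ ≤ ε) : ‖z - w‖ ≤ ε * ‖log z - log w‖ := by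
  have hε : 0 < ε := (norm_pos_iff.2 hz₀).trans_le hz
  simpa [exp_log hz₀, exp_log hw₀, Real.exp_log hε] using
    norm_exp_sub_exp_le (re_log_le_of_norm_le hz₀ hz) (re_log_le_of_norm_le hw₀ hw)

lemma exists_le_norm_of_norm_le_norm {T : ℝ} (hT : 0 ≤ T) {L₁ L₂ : ℂ} (h₁ : L₁.re ≤ -T)
    (h₂ : L₂.re ≤ -T) (him₁ : |L₁.im| ≤ Real.pi) (him₂ : |L₂.im| ≤ Real.pi) (hle : ‖L₁‖ ≤ ‖L₂‖) :
    ∃ t, T ≤ t ∧ t ≤ ‖L₁‖ ∧ t ≤ ‖L₂‖ ∧ ‖L₁‖ ≤ t + Real.pi := by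
  have hre_le : ∀ L : ℂ, -L.re ≤ ‖L‖ := fun L => (neg_le_abs _).trans (abs_re_le_norm _)
  have hle_re : ∀ L : ℂ, L.re ≤ 0 → |L.im| ≤ Real.pi → ‖L‖ ≤ -L.re + Real.pi := fun L hre him =>
    (norm_le_abs_re_add_abs_im L).trans (by rw [abs_of_nonpos hre]; linarith)
  rcases le_total (-L₁.re) (-L₂.re) with h' | h'
  · exact ⟨_, by linarith, hre_le L₁, h'.trans (hre_le L₂), hle_re L₁ (by linarith) him₁⟩
  · exact ⟨_, by linarith, h'.trans (hre_le L₁), hre_le L₂,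
      hle.trans (hle_re L₂ (by linarith) him₂)⟩

lemma hasSum_succ_mul_geometric_two : HasSum (fun n : ℕ => ((n : ℝ) + 1) * (1 / 2) ^ n) 4 := by
  have h := (hasSum_coe_mul_geometric_of_norm_lt_one (𝕜 := ℝ) (r := 1 / 2) (by norm_num)).add
    hasSum_geometric_two
  rw [show (4 : ℝ) = 1 / 2 / (1 - 1 / 2) ^ 2 + 2 by norm_num]
  simpa only [add_mul, one_mul] using h

section PowerSeries

variable {d : ℕ → ℂ} {B : ℝ}

lemma summable_mul_pow_of_norm_le_pow (hB : 0 ≤ B) (hd : ∀ k, 1 ≤ k → ‖d k‖ ≤ B ^ k) {z : ℂ}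
    (hz : B * ‖z‖ < 1) : Summable fun k => d k * z ^ k := by
  refine .of_norm_bounded_eventually_nat (summable_geometric_of_lt_one (by positivity) hz) ?_
  filter_upwards [eventually_ge_atTop 1] with k hk
  rw [norm_mul, norm_pow, mul_pow]
  gcongr
  exact hd k hk

lemma norm_tsum_mul_pow_sub_le (hB : 0 ≤ B) (hd : ∀ k, 1 ≤ k → ‖d k‖ ≤ B ^ k) {e : ℝ}
    (hBe : B * e ≤ 1 / 2) {z w : ℂ} (hz : ‖z‖ ≤ e) (hw : ‖w‖ ≤ e) :
    ‖∑' k, d k * z ^ k - ∑' k, d k * w ^ k‖ ≤ 4 * B * ‖z - w‖ := by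
  have he : 0 ≤ e := (norm_nonneg z).trans hz
  have hsum : ∀ x : ℂ, ‖x‖ ≤ e → Summable fun k => d k * x ^ k := fun x hx =>
    summable_mul_pow_of_norm_le_pow hB hd (by nlinarith [norm_nonneg x])
  have hterm : ∀ k : ℕ, ‖d k * z ^ k - d k * w ^ k‖ ≤ 2 * B * ‖z - w‖ * (k * (1 / 2) ^ k) := by
    rintro (_ | j)
    · simp
    calc ‖d (j + 1) * z ^ (j + 1) - d (j + 1) * w ^ (j + 1)‖
        = ‖d (j + 1)‖ * ‖z ^ (j + 1) - w ^ (j + 1)‖ := by rw [← mul_sub, norm_mul]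
      _ ≤ B ^ (j + 1) * ((j + 1) * e ^ j * ‖z - w‖) :=
          mul_le_mul (hd _ j.succ_pos) (norm_pow_succ_sub_pow_succ_le j hz hw) (by positivity)
            (by positivity)
      _ = 2 * B * ‖z - w‖ * ((j + 1) * (B * e) ^ j * (1 / 2)) := by ring
      _ ≤ 2 * B * ‖z - w‖ * ((j + 1) * (1 / 2) ^ j * (1 / 2)) := by gcongr
      _ = 2 * B * ‖z - w‖ * ((j + 1 : ℕ) * (1 / 2) ^ (j + 1)) := by push_cast; ring
  have hg : HasSum (fun k : ℕ => 2 * B * ‖z - w‖ * (k * (1 / 2) ^ k)) (4 * B * ‖z - w‖) := by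
    have h := (hasSum_coe_mul_geometric_of_norm_lt_one (𝕜 := ℝ) (r := 1 / 2) (by norm_num)).mul_left
      (2 * B * ‖z - w‖)
    rwa [show 2 * B * ‖z - w‖ * (1 / 2 / (1 - 1 / 2) ^ 2) = 4 * B * ‖z - w‖ by ring] at h
  rw [← (hsum z hz).tsum_sub (hsum w hw)]
  exact tsum_of_norm_bounded hg hterm

end PowerSeries

section InversePowerSeries

variable {M t : ℝ}

lemma norm_div_pow_succ_le {p L : ℂ} (n : ℕ) (hM : 0 ≤ M) (ht : 0 < t) (hMt : M / t ≤ 1 / 2)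
    (hp : ‖p‖ ≤ M ^ (n + 1)) (hL : t ≤ ‖L‖) : ‖p / L ^ (n + 1)‖ ≤ M / t * (1 / 2) ^ n := by
  calc ‖p / L ^ (n + 1)‖ = ‖p‖ / ‖L‖ ^ (n + 1) := by rw [norm_div, norm_pow]
    _ ≤ M ^ (n + 1) / t ^ (n + 1) := by gcongr
    _ = M / t * (M / t) ^ n := by rw [← div_pow, pow_succ']
    _ ≤ M / t * (1 / 2) ^ n := by gcongr

variable {p p₁ p₂ : ℕ → ℂ} {L L₁ L₂ : ℂ}

lemma summable_div_pow_succ (hM : 0 ≤ M) (ht : 0 < t) (hMt : M / t ≤ 1 / 2)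
    (hp : ∀ n, ‖p n‖ ≤ M ^ (n + 1)) (hL : t ≤ ‖L‖) : Summable fun n => p n / L ^ (n + 1) :=
  .of_norm_bounded (summable_geometric_two.mul_left (M / t))
    fun n => norm_div_pow_succ_le n hM ht hMt (hp n) hL

lemma norm_tsum_div_pow_succ_le (hM : 0 ≤ M) (ht : 0 < t) (hMt : M / t ≤ 1 / 2)
    (hp : ∀ n, ‖p n‖ ≤ M ^ (n + 1)) (hL : t ≤ ‖L‖) : ‖∑' n, p n / L ^ (n + 1)‖ ≤ 2 * (M / t) := by
  refine tsum_of_norm_bounded ?_ fun n => norm_div_pow_succ_le n hM ht hMt (hp n) hL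
  simpa [mul_comm] using hasSum_geometric_two.mul_left (M / t)

lemma norm_div_pow_succ_sub_div_pow_succ_le (n : ℕ) {K : ℝ} {q₁ q₂ : ℂ} (hM : 0 ≤ M) (ht : 2 ≤ t)
    (hMt : M / t ≤ 1 / 2) (hq₁ : ‖q₁‖ ≤ M ^ (n + 1)) (hK : ‖q₂ - q₁‖ ≤ K) (hL₁ : t ≤ ‖L₁‖)
    (hL₂ : t ≤ ‖L₂‖) :
    ‖q₂ / L₂ ^ (n + 1) - q₁ / L₁ ^ (n + 1)‖
      ≤ K / t * (1 / 2) ^ n + M / t ^ 2 * ‖L₂ - L₁‖ * ((n + 1) * (1 / 2) ^ n) := by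
  have ht₀ : 0 < t := by linarith
  have hK₀ : 0 ≤ K := (norm_nonneg _).trans hK
  have hsplit : q₂ / L₂ ^ (n + 1) - q₁ / L₁ ^ (n + 1)
      = (q₂ - q₁) / L₂ ^ (n + 1) + q₁ * ((L₂ ^ (n + 1))⁻¹ - (L₁ ^ (n + 1))⁻¹) := by ring
  rw [hsplit]
  refine (norm_add_le _ _).trans (add_le_add ?_ ?_)
  · calc ‖(q₂ - q₁) / L₂ ^ (n + 1)‖ = ‖q₂ - q₁‖ / ‖L₂‖ ^ (n + 1) := by rw [norm_div, norm_pow]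
      _ ≤ K / t ^ (n + 1) := by gcongr
      _ = K / t * t⁻¹ ^ n := by rw [inv_pow, pow_succ']; field_simp
      _ ≤ K / t * (1 / 2) ^ n := by
          gcongr
          rw [inv_le_comm₀ ht₀ (by norm_num)]
          linarith
  · calc ‖q₁ * ((L₂ ^ (n + 1))⁻¹ - (L₁ ^ (n + 1))⁻¹)‖
        ≤ M ^ (n + 1) * ((n + 1) / t ^ (n + 2) * ‖L₂ - L₁‖) := by
          rw [norm_mul]
          gcongr
          exact norm_inv_pow_succ_sub_inv_pow_succ_le n ht₀ hL₂ hL₁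
      _ = M / t ^ 2 * ‖L₂ - L₁‖ * ((n + 1) * (M / t) ^ n) := by rw [div_pow]; field_simp; ring
      _ ≤ M / t ^ 2 * ‖L₂ - L₁‖ * ((n + 1) * (1 / 2) ^ n) := by gcongr

lemma norm_tsum_div_pow_succ_sub_le_s11 {K : ℝ} (hM : 0 ≤ M) (ht : 2 ≤ t) (hMt : M / t ≤ 1 / 2)
    (hp₁ : ∀ n, ‖p₁ n‖ ≤ M ^ (n + 1)) (hp₂ : ∀ n, ‖p₂ n‖ ≤ M ^ (n + 1))
    (hK : ∀ n, ‖p₂ n - p₁ n‖ ≤ K) (hL₁ : t ≤ ‖L₁‖) (hL₂ : t ≤ ‖L₂‖) :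
    ‖∑' n, p₂ n / L₂ ^ (n + 1) - ∑' n, p₁ n / L₁ ^ (n + 1)‖
      ≤ 2 * K / t + 4 * M / t ^ 2 * ‖L₂ - L₁‖ := by
  have ht₀ : 0 < t := by linarith
  rw [← (summable_div_pow_succ hM ht₀ hMt hp₂ hL₂).tsum_sub
    (summable_div_pow_succ hM ht₀ hMt hp₁ hL₁)]
  refine tsum_of_norm_bounded ?_ fun n =>
    norm_div_pow_succ_sub_div_pow_succ_le n hM ht hMt (hp₁ n) (hK n) hL₁ hL₂
  rw [show 2 * K / t + 4 * M / t ^ 2 * ‖L₂ - L₁‖ = K / t * 2 + M / t ^ 2 * ‖L₂ - L₁‖ * 4 by ring]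
  exact (hasSum_geometric_two.mul_left (K / t)).add
    (hasSum_succ_mul_geometric_two.mul_left (M / t ^ 2 * ‖L₂ - L₁‖))

end InversePowerSeries

lemma eq_of_mul_one_add_eq_mul_one_add {L₁ L₂ S₁ S₂ : ℂ} (hS₁ : ‖S₁‖ ≤ 1 / 2)
    (hS : ‖L₁‖ * ‖S₂ - S₁‖ ≤ ‖L₂ - L₁‖ / 4) (h : L₂ * (1 + S₁) = L₁ * (1 + S₂)) : L₁ = L₂ := by
  have h1S : 1 / 2 ≤ ‖1 + S₁‖ := by
    have := norm_sub_norm_le (1 : ℂ) (-S₁)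
    rw [norm_one, norm_neg, sub_neg_eq_add] at this
    linarith
  have hkey : ‖L₂ - L₁‖ * ‖1 + S₁‖ = ‖L₁‖ * ‖S₂ - S₁‖ := by
    rw [← norm_mul, ← norm_mul]
    congr 1
    linear_combination h
  have : ‖L₂ - L₁‖ = 0 := by nlinarith [norm_nonneg (L₂ - L₁)]
  exact (sub_eq_zero.1 (norm_eq_zero.1 this)).symm

def puncturedHalfDisk (ε : ℝ) : Set ℂ := {z : ℂ | 0 < ‖z‖ ∧ ‖z‖ ≤ ε ∧ 0 ≤ z.im}

noncomputable def tailSum (c : ℕ → ℕ → ℝ) (z : ℂ) : ℂ :=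
  ∑' n : ℕ, Phi c (n + 1) z / log z ^ (n + 1)

section Admissible

variable {a : ℝ} {c : ℕ → ℕ → ℝ} {z₁ z₂ : ℂ}

lemma log_mul_one_add_tailSum_eq_of_fRep_eq (ha : a ≠ 0) (h₁ : log z₁ ≠ 0) (h₂ : log z₂ ≠ 0)
    (h : fRep a c z₁ = fRep a c z₂) :
    log z₂ * (1 + tailSum c z₁) = log z₁ * (1 + tailSum c z₂) := by
  have hπ : (Real.pi : ℂ) ≠ 0 := ofReal_ne_zero.2 Real.pi_ne_zero
  have ha' : (a : ℂ) ≠ 0 := ofReal_ne_zero.2 ha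
  unfold fRep at h
  field_simp at h
  unfold tailSum
  linear_combination -h

variable {B M r ε : ℝ}

lemma norm_Phi_sub_Phi_le {n : ℕ} (hB : 0 ≤ B) (hc : ∀ k, 1 ≤ k → |c n k| ≤ B ^ k)
    (hBε : B * ε ≤ 1 / 2) (hz₁ : z₁ ∈ puncturedHalfDisk ε) (hz₂ : z₂ ∈ puncturedHalfDisk ε) :
    ‖Phi c n z₂ - Phi c n z₁‖ ≤ 4 * B * ε * ‖log z₂ - log z₁‖ := by
  have hd : ∀ k, 1 ≤ k → ‖(c n k : ℂ)‖ ≤ B ^ k := fun k hk => by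
    rw [norm_real, Real.norm_eq_abs]; exact hc k hk
  calc ‖Phi c n z₂ - Phi c n z₁‖ ≤ 4 * B * ‖z₂ - z₁‖ :=
        norm_tsum_mul_pow_sub_le hB hd hBε hz₂.2.1 hz₁.2.1
    _ ≤ 4 * B * (ε * ‖log z₂ - log z₁‖) := by
        gcongr
        exact norm_sub_le_mul_norm_log_sub (norm_pos_iff.1 hz₂.1) (norm_pos_iff.1 hz₁.1)
          hz₂.2.1 hz₁.2.1
    _ = 4 * B * ε * ‖log z₂ - log z₁‖ := by ring

lemma eq_of_fRep_eq (ha : a ≠ 0) (hB : 0 ≤ B)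
    (hc : ∀ n, 1 ≤ n → ∀ k, 1 ≤ k → |c n k| ≤ B ^ k) (hM : 1 ≤ M)
    (hΦ : ∀ n, 1 ≤ n → ∀ z : ℂ, ‖z‖ ≤ r → 0 ≤ z.im → ‖Phi c n z‖ ≤ M ^ n)
    (hεr : ε ≤ r) (hεM : ε ≤ Real.exp (-(64 * M))) (hεB : 128 * B * ε ≤ 1)
    (hz₁ : z₁ ∈ puncturedHalfDisk ε) (hz₂ : z₂ ∈ puncturedHalfDisk ε)
    (hle : ‖log z₁‖ ≤ ‖log z₂‖) (h : fRep a c z₁ = fRep a c z₂) : z₁ = z₂ := by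
  have hre : ∀ z ∈ puncturedHalfDisk ε, (log z).re ≤ -(64 * M) := fun z hz =>
    (re_log_le_of_norm_le (norm_pos_iff.1 hz.1) (hz.2.1.trans hεM)).trans_eq (Real.log_exp _)
  have him : ∀ z : ℂ, |(log z).im| ≤ Real.pi := fun z => by rw [log_im]; exact abs_arg_le_pi z
  obtain ⟨t, ht, ht₁, ht₂, hL₁⟩ := exists_le_norm_of_norm_le_norm (by linarith) (hre z₁ hz₁)
    (hre z₂ hz₂) (him z₁) (him z₂) hle
  have hp : ∀ z ∈ puncturedHalfDisk ε, ∀ n : ℕ, ‖Phi c (n + 1) z‖ ≤ M ^ (n + 1) :=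
    fun z hz n => hΦ (n + 1) n.succ_pos z (hz.2.1.trans hεr) hz.2.2
  have hMt : M / t ≤ 1 / 64 := by rw [div_le_iff₀ (by linarith)]; linarith
  have hS₁ : ‖tailSum c z₁‖ ≤ 1 / 2 :=
    (norm_tsum_div_pow_succ_le (by linarith) (by linarith) (by linarith) (hp z₁ hz₁) ht₁).trans
      (by linarith)
  have hS : ‖tailSum c z₂ - tailSum c z₁‖
      ≤ 2 * (4 * B * ε * ‖log z₂ - log z₁‖) / t + 4 * M / t ^ 2 * ‖log z₂ - log z₁‖ :=
    norm_tsum_div_pow_succ_sub_le_s11 (by linarith) (by linarith) (by linarith) (hp z₁ hz₁)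
      (hp z₂ hz₂) (fun n => norm_Phi_sub_Phi_le hB (hc (n + 1) n.succ_pos) (by linarith) hz₁ hz₂)
      ht₁ ht₂
  have hlog₀ : ∀ z : ℂ, t ≤ ‖log z‖ → log z ≠ 0 := fun z hz =>
    norm_pos_iff.1 (by linarith)
  have hlog : log z₁ = log z₂ := by
    refine eq_of_mul_one_add_eq_mul_one_add hS₁ ?_
      (log_mul_one_add_tailSum_eq_of_fRep_eq ha (hlog₀ z₁ ht₁) (hlog₀ z₂ ht₂) h)
    have ht₀ : 0 < t := by linarith
    have hε : 0 ≤ ε := hz₁.1.le.trans hz₁.2.1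
    calc ‖log z₁‖ * ‖tailSum c z₂ - tailSum c z₁‖
        ≤ (t + Real.pi) * ((8 * B * ε / t + 4 * M / t ^ 2) * ‖log z₂ - log z₁‖) :=
          mul_le_mul hL₁ (hS.trans_eq (by ring)) (norm_nonneg _) (by positivity)
      _ ≤ 2 * t * ((8 * B * ε / t + 4 * M / t ^ 2) * ‖log z₂ - log z₁‖) := by
          gcongr
          linarith [Real.pi_le_four]
      _ = (16 * B * ε + 8 * (M / t)) * ‖log z₂ - log z₁‖ := by field_simp; ring
      _ ≤ (1 / 8 + 1 / 8) * ‖log z₂ - log z₁‖ := by gcongr <;> linarith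
      _ = ‖log z₂ - log z₁‖ / 4 := by ring
  rw [← exp_log (norm_pos_iff.1 hz₁.1), hlog, exp_log (norm_pos_iff.1 hz₂.1)]

lemma injOn_fRep_puncturedHalfDisk (ha : a ≠ 0) (hB : 0 ≤ B)
    (hc : ∀ n, 1 ≤ n → ∀ k, 1 ≤ k → |c n k| ≤ B ^ k) (hM : 1 ≤ M)
    (hΦ : ∀ n, 1 ≤ n → ∀ z : ℂ, ‖z‖ ≤ r → 0 ≤ z.im → ‖Phi c n z‖ ≤ M ^ n)
    (hεr : ε ≤ r) (hεM : ε ≤ Real.exp (-(64 * M))) (hεB : 128 * B * ε ≤ 1) :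
    Set.InjOn (fRep a c) (puncturedHalfDisk ε) := by
  intro z₁ hz₁ z₂ hz₂ h
  rcases le_total ‖log z₁‖ ‖log z₂‖ with hle | hle
  · exact eq_of_fRep_eq ha hB hc hM hΦ hεr hεM hεB hz₁ hz₂ hle h
  · exact (eq_of_fRep_eq ha hB hc hM hΦ hεr hεM hεB hz₂ hz₁ hle h.symm).symm

end Admissible

/-- An admissible representation is univalent on a small punctured closed upper half-disk. -/
theorem stmt11 (a : ℝ) (c : ℕ → ℕ → ℝ) (hadm : Admissible a c) :
    ∃ ε > (0 : ℝ), Set.InjOn (fRep a c)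
      {z : ℂ | 0 < ‖z‖ ∧ ‖z‖ ≤ ε ∧ 0 ≤ z.im} := by
  obtain ⟨ha, ⟨B₀, hB₀⟩, ⟨r, hr, M₀, hM₀, hΦ⟩, -, -⟩ := hadm
  set B := max B₀ 1
  set M := max M₀ 1
  have hB : 0 < B := zero_lt_one.trans_le (le_max_right _ _)
  have hc : ∀ n, 1 ≤ n → ∀ k, 1 ≤ k → |c n k| ≤ B ^ k := fun n hn k hk => by
    rw [← Real.rpow_natCast, ← Real.rpow_inv_le_iff_of_pos (abs_nonneg _) hB.le (by positivity),
      ← one_div]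
    exact (hB₀ n hn k hk).trans (le_max_left _ _)
  have hΦM : ∀ n, 1 ≤ n → ∀ z : ℂ, ‖z‖ ≤ r → 0 ≤ z.im → ‖Phi c n z‖ ≤ M ^ n :=
    fun n hn z hz him => (hΦ n hn z hz him).trans (by gcongr; exact le_max_left _ _)
  set ε := min r (min (Real.exp (-(64 * M))) (128 * B)⁻¹)
  have hεB : 128 * B * ε ≤ 1 := by
    have : ε ≤ (128 * B)⁻¹ := (min_le_right _ _).trans (min_le_right _ _)
    exact (le_div_iff₀' (by positivity)).1 (this.trans_eq (one_div _).symm)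
  exact ⟨ε, by positivity, injOn_fRep_puncturedHalfDisk ha.ne' hB.le hc (le_max_right _ _) hΦM
    (min_le_left _ _) ((min_le_right _ _).trans (min_le_left _ _)) hεB⟩
end

section
/- Let d > 0 and let f be given by an admissible representation f(z) = (−2π/(a·log z))·(1 + Σ_{n≥1} Φ_n(z)/(log z)^n). For x < 0 near 0, define g(x) = f(x)^{1/d} = exp(d^{−1}·Log f(x)) with the branch satisfying 1^{1/d} = 1, and write g(x) = u*(x) + i·v*(x). Then v*(x) = (a/(2d))·(u*(x))^{1+d} + o((u*(x))^{1+d}) as x → 0⁻; that is, the curve Γ^{1/d} = { f(x)^{1/d} : x ∈ (−ε, 0) } has d-th order tangency to the real axis at the origin. -/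
open Complex Filter Topology

/-!
For `x < 0` we have `log x = log |x| + iπ`, and the coefficients `Φₙ(x)` are real. Hence the
correction series `S = Σ Φₙ(x) / (log x)ⁿ` is `O(1 / log x)` and `S · log x` is real up to
`O(1 / log x)`. This gives `Im (1 / f(x)) → -a/2`, while `-log |x| · f(x) → 2π/a` forces
`θ = arg f(x) → 0`. In polar form `v*/(u*)^(1+d) = sin (θ/d) / (|f| cos^(1+d) (θ/d))`, and
since `sin θ / |f| = -Im (1 / f)`, this ratio tends to `(1/d) · (a/2)`.
-/

open Asymptotics

theorem tendsto_div_nhdsNE_of_hasDerivAt {𝕜 : Type*} [NontriviallyNormedField 𝕜]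
    {f g : 𝕜 → 𝕜} {f' g' a : 𝕜} (hf : HasDerivAt f f' a) (hg : HasDerivAt g g' a)
    (hfa : f a = 0) (hga : g a = 0) (hg' : g' ≠ 0) :
    Tendsto (fun t => f t / g t) (𝓝[≠] a) (𝓝 (f' / g')) := by
  refine ((hasDerivAt_iff_tendsto_slope.mp hf).div (hasDerivAt_iff_tendsto_slope.mp hg)
    hg').congr' ?_
  filter_upwards [self_mem_nhdsWithin] with t ht
  rw [Pi.div_apply, slope_def_field, slope_def_field, hfa, hga, sub_zero, sub_zero,
    div_div_div_cancel_right₀ (sub_ne_zero.mpr ht)]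

theorem Real.tendsto_sin_div_div_sin (d : ℝ) :
    Tendsto (fun t => Real.sin (t / d) / Real.sin t) (𝓝[≠] 0) (𝓝 (1 / d)) := by
  have hf : HasDerivAt (fun t => Real.sin (t / d)) (1 / d) 0 := by
    simpa using ((hasDerivAt_id (0 : ℝ)).div_const d).sin
  simpa using tendsto_div_nhdsNE_of_hasDerivAt hf (Real.hasDerivAt_sin 0) (by simp)
    Real.sin_zero (by simp)

theorem Asymptotics.isLittleO_sub_mul_of_tendsto_div {α 𝕜 : Type*} [NormedField 𝕜]
    {l : Filter α} {u v : α → 𝕜} {c : 𝕜} (hu : ∀ᶠ x in l, u x ≠ 0)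
    (h : Tendsto (fun x => v x / u x) l (𝓝 c)) :
    (fun x => v x - c * u x) =o[l] u := by
  rw [isLittleO_iff_tendsto' (hu.mono fun x hx h0 => absurd h0 hx)]
  simpa using (h.sub_const c).congr' <| hu.mono fun x hx => by
    rw [sub_div, mul_div_assoc, div_self hx, mul_one]

theorem norm_tsum_le_two_mul_pow {E : Type*} [SeminormedAddCommGroup E] {b : ℕ → E} {ρ : ℝ}
    (k : ℕ) (hρ₀ : 0 ≤ ρ) (hρ : ρ ≤ 1 / 2) (hb : ∀ n, ‖b n‖ ≤ ρ ^ (n + k)) :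
    ‖∑' n, b n‖ ≤ 2 * ρ ^ k := by
  have hsum : HasSum (fun n => ρ ^ k * ρ ^ n) (ρ ^ k * (1 - ρ)⁻¹) :=
    (hasSum_geometric_of_lt_one hρ₀ (by linarith)).mul_left _
  refine (tsum_of_norm_bounded hsum fun n => (hb n).trans_eq (by ring)).trans ?_
  have : (1 - ρ)⁻¹ ≤ 2 := by
    rw [inv_le_comm₀ (by linarith) two_pos]
    linarith
  nlinarith [pow_nonneg hρ₀ k]

section PowerSeriesTail

variable {𝕜 : Type*} [NormedField 𝕜] {Φ : ℕ → 𝕜} {M : ℝ} {u : 𝕜}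

theorem norm_mul_pow_succ_le (hΦ : ∀ n, ‖Φ n‖ ≤ M ^ (n + 1)) (n : ℕ) :
    ‖Φ n * u ^ (n + 1)‖ ≤ (M * ‖u‖) ^ (n + 1) := by
  rw [norm_mul, norm_pow, mul_pow]
  gcongr
  exact hΦ n

theorem norm_tsum_mul_pow_succ_le (hΦ : ∀ n, ‖Φ n‖ ≤ M ^ (n + 1)) (hu : M * ‖u‖ ≤ 1 / 2) :
    ‖∑' n, Φ n * u ^ (n + 1)‖ ≤ 2 * (M * ‖u‖) := by
  have hM : 0 ≤ M := by simpa using (norm_nonneg _).trans (hΦ 0)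
  simpa using norm_tsum_le_two_mul_pow 1 (by positivity) hu (norm_mul_pow_succ_le hΦ)

theorem norm_tsum_mul_pow_succ_sub_le [CompleteSpace 𝕜] (hΦ : ∀ n, ‖Φ n‖ ≤ M ^ (n + 1))
    (hu : M * ‖u‖ ≤ 1 / 2) :
    ‖∑' n, Φ n * u ^ (n + 1) - Φ 0 * u‖ ≤ 2 * (M * ‖u‖) ^ 2 := by
  have hM : 0 ≤ M := by simpa using (norm_nonneg _).trans (hΦ 0)
  have hρ : 0 ≤ M * ‖u‖ := by positivity
  have hsum : Summable fun n => Φ n * u ^ (n + 1) :=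
    .of_norm_bounded ((summable_nat_add_iff 1).2 (summable_geometric_of_lt_one hρ (by linarith)))
      (norm_mul_pow_succ_le hΦ)
  rw [hsum.tsum_eq_zero_add, zero_add, pow_one, add_sub_cancel_left]
  exact norm_tsum_le_two_mul_pow 2 hρ hu fun n => norm_mul_pow_succ_le hΦ (n + 1)

theorem isBigO_tsum_mul_pow_succ [CompleteSpace 𝕜] {α : Type*} {l : Filter α}
    {Φ : α → ℕ → 𝕜} {u : α → 𝕜} (hu : Tendsto u l (𝓝 0))
    (hΦ : ∀ᶠ x in l, ∀ n, ‖Φ x n‖ ≤ M ^ (n + 1)) :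
    (fun x => ∑' n, Φ x n * u x ^ (n + 1)) =O[l] u ∧
      (fun x => ∑' n, Φ x n * u x ^ (n + 1) - Φ x 0 * u x) =O[l] fun x => u x ^ 2 := by
  have hsmall : ∀ᶠ x in l, M * ‖u x‖ ≤ 1 / 2 :=
    (hu.norm.const_mul M).eventually (eventually_le_nhds (by norm_num))
  constructor
  · refine .of_bound (2 * M) ?_
    filter_upwards [hΦ, hsmall] with x hΦx hx
    linarith [norm_tsum_mul_pow_succ_le hΦx hx]
  · refine .of_bound (2 * M ^ 2) ?_
    filter_upwards [hΦ, hsmall] with x hΦx hx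
    rw [norm_pow]
    linarith [norm_tsum_mul_pow_succ_sub_le hΦx hx]

end PowerSeriesTail

section LogRepresentation

variable {α : Type*} {l : Filter α} {L S : α → ℂ}

theorem tendsto_im_div_one_add_sub_im {Φ₁ : α → ℂ} (hΦ₁ : ∀ x, (Φ₁ x).im = 0)
    (hL : ∀ᶠ x in l, L x ≠ 0) (hinv : Tendsto (fun x => (L x)⁻¹) l (𝓝 0))
    (hS : S =O[l] fun x => (L x)⁻¹)
    (hS₂ : (fun x => S x - Φ₁ x * (L x)⁻¹) =O[l] fun x => (L x)⁻¹ ^ 2) :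
    Tendsto (fun x => (L x / (1 + S x)).im - (L x).im) l (𝓝 0) := by
  have hS₀ : Tendsto S l (𝓝 0) := hS.trans_tendsto hinv
  have hLS : (fun x => L x * S x) =O[l] fun _ => (1 : ℂ) :=
    ((isBigO_refl L l).mul hS).congr' .rfl (hL.mono fun x hx => mul_inv_cancel₀ hx)
  have hLSS : Tendsto (fun x => L x * S x * S x) l (𝓝 0) :=
    (hLS.mul (isBigO_refl S l)).trans_tendsto (by simpa using hS₀)
  have hW : Tendsto (fun x => L x * (S x - Φ₁ x * (L x)⁻¹)) l (𝓝 0) :=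
    ((isBigO_refl L l).mul hS₂).trans_tendsto
      (hinv.congr' (hL.mono fun x hx => by field_simp))
  -- `L S = Φ₁ + L (S - Φ₁ / L)` with `Φ₁` real: `Im (L S) → 0` although `L S` need not converge.
  have hG : Tendsto (fun x => -(L x * (S x - Φ₁ x * (L x)⁻¹)) + L x * S x * S x / (1 + S x))
      l (𝓝 0) := by
    simpa using hW.neg.add (hLSS.div (tendsto_const_nhds.add hS₀) (by simp))
  have hS₁ : ∀ᶠ x in l, 1 + S x ≠ 0 :=
    (tendsto_const_nhds.add hS₀).eventually_ne (by simp)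
  refine ((continuous_im.tendsto 0).comp hG).congr' ?_
  filter_upwards [hL, hS₁] with x hx hx₁
  have hsplit : L x / (1 + S x) - L x
      = -(L x * (S x - Φ₁ x * (L x)⁻¹)) + L x * S x * S x / (1 + S x) - Φ₁ x := by
    field_simp
    ring
  rw [← sub_im, hsplit, sub_im, hΦ₁, sub_zero, Function.comp_apply]

variable {a : ℝ} {F : α → ℂ}

theorem tendsto_neg_im_inv_of_log_expansion {Φ₁ : α → ℂ} (hΦ₁ : ∀ x, (Φ₁ x).im = 0)
    (hF : ∀ x, F x = -(2 * (Real.pi : ℂ)) / (a * L x) * (1 + S x))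
    (him : ∀ᶠ x in l, (L x).im = Real.pi) (hinv : Tendsto (fun x => (L x)⁻¹) l (𝓝 0))
    (hS : S =O[l] fun x => (L x)⁻¹)
    (hS₂ : (fun x => S x - Φ₁ x * (L x)⁻¹) =O[l] fun x => (L x)⁻¹ ^ 2) :
    Tendsto (fun x => -(F x)⁻¹.im) l (𝓝 (a / 2)) := by
  have hL : ∀ᶠ x in l, L x ≠ 0 :=
    him.mono fun x hx h0 => Real.pi_ne_zero (by simpa [h0] using hx.symm)
  have hlim : Tendsto (fun x => (L x / (1 + S x)).im) l (𝓝 Real.pi) := by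
    have := (tendsto_im_div_one_add_sub_im hΦ₁ hL hinv hS hS₂).add_const Real.pi
    rw [zero_add] at this
    refine this.congr' ?_
    filter_upwards [him] with x hx
    rw [hx, sub_add_cancel]
  have hinvF : ∀ x, (F x)⁻¹ = ((-(a / (2 * Real.pi)) : ℝ) : ℂ) * (L x / (1 + S x)) := by
    intro x
    rw [hF, mul_inv, inv_div]
    push_cast
    ring
  have hval : a / (2 * Real.pi) * Real.pi = a / 2 := by
    field_simp [Real.pi_ne_zero]
  rw [← hval]
  refine (hlim.const_mul _).congr fun x => ?_
  rw [hinvF, im_ofReal_mul]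
  ring

theorem tendsto_arg_of_log_expansion (ha : 0 < a)
    (hF : ∀ x, F x = -(2 * (Real.pi : ℂ)) / (a * L x) * (1 + S x))
    (hre : ∀ᶠ x in l, (L x).re < 0) (him : ∀ᶠ x in l, (L x).im = Real.pi)
    (hinv : Tendsto (fun x => (L x)⁻¹) l (𝓝 0)) (hS : Tendsto S l (𝓝 0)) :
    Tendsto (fun x => arg (F x)) l (𝓝 0) := by
  have hscaled :
      Tendsto (fun x => ((-(L x).re : ℝ) : ℂ) * F x) l (𝓝 ((2 * Real.pi / a : ℝ) : ℂ)) := by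
    have hlim : Tendsto
        (fun x => ((2 * Real.pi / a : ℝ) : ℂ) * (1 - Real.pi * I * (L x)⁻¹) * (1 + S x)) l
        (𝓝 (((2 * Real.pi / a : ℝ) : ℂ) * (1 - Real.pi * I * 0) * (1 + 0))) :=
      (tendsto_const_nhds.mul (tendsto_const_nhds.sub (tendsto_const_nhds.mul hinv))).mul
        (tendsto_const_nhds.add hS)
    rw [mul_zero, sub_zero, mul_one, add_zero, mul_one] at hlim
    refine hlim.congr' ?_
    filter_upwards [him] with x hx
    have hL : L x ≠ 0 := fun h0 => Real.pi_ne_zero (by simpa [h0] using hx.symm)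
    have hre_eq : ((L x).re : ℂ) = L x - Real.pi * I := by
      rw [← hx]
      exact eq_sub_of_add_eq (re_add_im (L x))
    rw [hF]
    push_cast
    rw [hre_eq]
    field_simp
  have harg := (continuousAt_arg (ofReal_mem_slitPlane.2 (by positivity))).tendsto.comp hscaled
  rw [arg_ofReal_of_nonneg (by positivity)] at harg
  refine harg.congr' ?_
  filter_upwards [hre] with x hx
  exact arg_real_mul _ (neg_pos.2 hx)

end LogRepresentation

section Root

variable {d : ℝ}

theorem exp_one_div_mul_log_re {z : ℂ} (hz : z ≠ 0) :
    (exp (1 / (d : ℂ) * log z)).re = ‖z‖ ^ (1 / d) * Real.cos (arg z / d) := by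
  rw [exp_re, Real.rpow_def_of_pos (norm_pos_iff.2 hz)]
  norm_cast
  rw [re_ofReal_mul, im_ofReal_mul, log_re, log_im]
  ring_nf

theorem exp_one_div_mul_log_im {z : ℂ} (hz : z ≠ 0) :
    (exp (1 / (d : ℂ) * log z)).im = ‖z‖ ^ (1 / d) * Real.sin (arg z / d) := by
  rw [exp_im, Real.rpow_def_of_pos (norm_pos_iff.2 hz)]
  norm_cast
  rw [re_ofReal_mul, im_ofReal_mul, log_re, log_im]
  ring_nf

theorem neg_inv_im_eq_sin_arg_div_norm (z : ℂ) : -(z⁻¹).im = Real.sin (arg z) / ‖z‖ := by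
  rw [inv_im, sin_arg, normSq_eq_norm_sq]
  ring

theorem exp_one_div_mul_log_im_div_re_rpow (hd : 0 < d) {z : ℂ} (hz : z ≠ 0)
    (hcos : 0 < Real.cos (arg z / d)) :
    (exp (1 / (d : ℂ) * log z)).im / (exp (1 / (d : ℂ) * log z)).re ^ (1 + d)
      = Real.sin (arg z / d) / (‖z‖ * Real.cos (arg z / d) ^ (1 + d)) := by
  have hz' : 0 < ‖z‖ := norm_pos_iff.2 hz
  have hroot : 0 < ‖z‖ ^ (1 / d) := Real.rpow_pos_of_pos hz' _
  rw [exp_one_div_mul_log_re hz, exp_one_div_mul_log_im hz,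
    Real.mul_rpow hroot.le hcos.le, ← Real.rpow_mul hz'.le,
    show 1 / d * (1 + d) = 1 / d + 1 by field_simp, Real.rpow_add hz', Real.rpow_one]
  have := Real.rpow_pos_of_pos hcos (1 + d)
  field_simp

theorem isLittleO_exp_one_div_mul_log {α : Type*} {l : Filter α} {F : α → ℂ} {κ : ℝ}
    (hd : 0 < d) (harg : Tendsto (fun x => arg (F x)) l (𝓝 0))
    (hκ : Tendsto (fun x => -(F x)⁻¹.im) l (𝓝 κ)) (hκ₀ : κ ≠ 0) :
    (fun x => (exp (1 / (d : ℂ) * log (F x))).im -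
        κ / d * (exp (1 / (d : ℂ) * log (F x))).re ^ (1 + d))
      =o[l] fun x => (exp (1 / (d : ℂ) * log (F x))).re ^ (1 + d) := by
  have hsin : ∀ᶠ x in l, Real.sin (arg (F x)) ≠ 0 := by
    filter_upwards [hκ.eventually_ne hκ₀] with x hx
    rw [neg_inv_im_eq_sin_arg_div_norm] at hx
    exact (div_ne_zero_iff.1 hx).1
  have hF : ∀ᶠ x in l, F x ≠ 0 :=
    hsin.mono fun x hx h0 => hx (by rw [h0, arg_zero, Real.sin_zero])
  have harg' : Tendsto (fun x => arg (F x)) l (𝓝[≠] 0) :=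
    tendsto_nhdsWithin_iff.2 ⟨harg, hsin.mono fun x hx h0 => hx (by rw [h0, Real.sin_zero])⟩
  have hcos : Tendsto (fun x => Real.cos (arg (F x) / d)) l (𝓝 1) := by
    simpa [Function.comp_def] using (Real.continuous_cos.tendsto _).comp (harg.div_const d)
  have hcos₀ : ∀ᶠ x in l, 0 < Real.cos (arg (F x) / d) := hcos.eventually_const_lt one_pos
  have hratio : Tendsto (fun x => (exp (1 / (d : ℂ) * log (F x))).im /
      (exp (1 / (d : ℂ) * log (F x))).re ^ (1 + d)) l (𝓝 (κ / d)) := by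
    have hlim := (((Real.tendsto_sin_div_div_sin d).comp harg').mul hκ).div
      (hcos.rpow_const (p := 1 + d) (.inl one_ne_zero)) (by simp)
    rw [Real.one_rpow, div_one, one_div_mul_eq_div] at hlim
    refine hlim.congr' ?_
    filter_upwards [hsin, hF, hcos₀] with x hx hFx hcx
    rw [exp_one_div_mul_log_im_div_re_rpow hd hFx hcx, Pi.div_apply, Function.comp_apply,
      neg_inv_im_eq_sin_arg_div_norm]
    have := norm_pos_iff.2 hFx
    field_simp
  refine isLittleO_sub_mul_of_tendsto_div ?_ hratio
  filter_upwards [hF, hcos₀] with x hFx hcx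
  rw [exp_one_div_mul_log_re hFx]
  exact (Real.rpow_pos_of_pos
    (mul_pos (Real.rpow_pos_of_pos (norm_pos_iff.2 hFx) _) hcx) _).ne'

end Root

theorem Phi_ofReal_im (c : ℕ → ℕ → ℝ) (n : ℕ) (x : ℝ) : (Phi c n x).im = 0 := by
  simp only [Phi, ← ofReal_pow, ← ofReal_mul, ← ofReal_tsum, ofReal_im]

theorem log_ofReal_im_of_neg {x : ℝ} (hx : x < 0) : (log (x : ℂ)).im = Real.pi := by
  rw [log_im, arg_ofReal_of_neg hx]

theorem tendsto_log_ofReal_re_nhdsLT :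
    Tendsto (fun x : ℝ => (log (x : ℂ)).re) (𝓝[<] 0) atBot := by
  simpa only [log_ofReal_re] using
    Real.tendsto_log_nhdsNE_zero.mono_left (nhdsLT_le_nhdsNE 0)

theorem tendsto_inv_log_ofReal_nhdsLT :
    Tendsto (fun x : ℝ => (log (x : ℂ))⁻¹) (𝓝[<] 0) (𝓝 0) := by
  have hnorm : Tendsto (fun x : ℝ => ‖log (x : ℂ)‖) (𝓝[<] 0) atTop :=
    tendsto_atTop_mono (fun x => abs_re_le_norm _)
      (tendsto_abs_atBot_atTop.comp tendsto_log_ofReal_re_nhdsLT)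
  exact tendsto_inv₀_cobounded.comp (tendsto_norm_atTop_iff_cobounded.1 hnorm)

/-- With `g(x) = f(x)^{1/d} = u*(x) + i v*(x)` (branch with `1^{1/d} = 1`),
`v*(x) = (a/(2d))·(u*(x))^{1+d} + o((u*(x))^{1+d})` as `x → 0⁻`:
the curve `Γ^{1/d}` has `d`-th order tangency to `ℝ` at `0`. -/
theorem stmt15 (d a : ℝ) (hd : 0 < d) (c : ℕ → ℕ → ℝ) (hadm : Admissible a c) :
    (fun x : ℝ =>
        (Complex.exp ((1 / (d : ℂ)) * Complex.log (fRep a c (x : ℂ)))).im -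
          (a / (2 * d)) *
            ((Complex.exp ((1 / (d : ℂ)) * Complex.log (fRep a c (x : ℂ)))).re) ^ ((1 : ℝ) + d))
      =o[nhdsWithin 0 (Set.Iio (0 : ℝ))]
      (fun x : ℝ =>
        ((Complex.exp ((1 / (d : ℂ)) * Complex.log (fRep a c (x : ℂ)))).re) ^ ((1 : ℝ) + d)) := by
  obtain ⟨ha, -, ⟨r, hr, M, -, hPhi⟩, -, -⟩ := hadm
  set L : ℝ → ℂ := fun x => log x
  set S : ℝ → ℂ := fun x => ∑' n, Phi c (n + 1) x * (L x)⁻¹ ^ (n + 1)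
  have hF : ∀ x : ℝ, fRep a c x = -(2 * (Real.pi : ℂ)) / (a * L x) * (1 + S x) := by
    simp [fRep, L, S, div_eq_mul_inv, inv_pow]
  have hinv := tendsto_inv_log_ofReal_nhdsLT
  have him : ∀ᶠ x in 𝓝[<] (0 : ℝ), (L x).im = Real.pi :=
    eventually_mem_nhdsWithin.mono fun x hx => log_ofReal_im_of_neg hx
  have hre : ∀ᶠ x in 𝓝[<] (0 : ℝ), (L x).re < 0 :=
    tendsto_log_ofReal_re_nhdsLT.eventually_lt_atBot 0
  have hΦ : ∀ᶠ x : ℝ in 𝓝[<] (0 : ℝ), ∀ n, ‖Phi c (n + 1) x‖ ≤ M ^ (n + 1) := by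
    filter_upwards [nhdsWithin_le_nhds (Metric.closedBall_mem_nhds (0 : ℝ) hr)] with x hx n
    exact hPhi (n + 1) (Nat.le_add_left 1 n) x (by simpa using hx) (by simp)
  obtain ⟨hS, hS₂⟩ := isBigO_tsum_mul_pow_succ hinv hΦ
  have hκ := tendsto_neg_im_inv_of_log_expansion (Phi_ofReal_im c 1) hF him hinv hS hS₂
  have harg := tendsto_arg_of_log_expansion ha hF hre him hinv (hS.trans_tendsto hinv)
  simpa only [div_div] using isLittleO_exp_one_div_mul_log hd harg hκ (half_pos ha).ne'
end
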